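/- arXiv:0707.2810 — 6 statements merged into one kernel-verified Lean document; each statement's English description precedes it below -/
import Mathlib

section
/- Let U be the (ℝ×ℝ)-matrix U(s,t) = 1 if s ≥ t and U(s,t) = 0 if s < t. If (H,v,w) is a Gram representation of U (with some finite Gram constant), then the Hilbert space H is not separable, and the maps t ↦ v_t and t ↦ w_t from ℝ to H are discontinuous at every point t ∈ ℝ. -/
/-!
If `b < a` then `⟪v a - v b, w a⟫ = 1`, and if `a < b` then `⟪v a, w a - w b⟫ = 1`; by
Cauchy–Schwarz the points `v t` (and likewise `w t`) are pairwise at distance at least `1 / γ`.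
An uncountable uniformly separated family cannot live in a separable space, and a uniformly
separated map cannot be continuous at a non-isolated point.
-/

open Filter Topology

section UniformlySeparated

variable {ι X E : Type*} [PseudoMetricSpace E] {ε : ℝ}

theorem Pairwise.countable_of_le_dist [TopologicalSpace.SeparableSpace E] {f : ι → E}
    (hε : 0 < ε) (hf : Pairwise fun a b => ε ≤ dist (f a) (f b)) : Countable ι := by
  refine Pairwise.countable_of_isOpen_disjoint (s := fun i => Metric.ball (f i) (ε / 2))
    (fun a b hab => Metric.ball_disjoint_ball ?_) (fun _ => Metric.isOpen_ball)
    (fun _ => Metric.nonempty_ball.2 (half_pos hε))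
  simpa using hf hab

theorem not_continuousAt_of_pairwise_le_dist [TopologicalSpace X] {f : X → E} (hε : 0 < ε)
    (hf : Pairwise fun a b => ε ≤ dist (f a) (f b)) (t : X) [(𝓝[≠] t).NeBot] :
    ¬ ContinuousAt f t := by
  intro hft
  have hclose : ∀ᶠ s in 𝓝[≠] t, dist (f s) (f t) < ε :=
    (hft.tendsto.mono_left nhdsWithin_le_nhds).eventually (Metric.ball_mem_nhds _ hε)
  obtain ⟨s, hst, hs⟩ := (hclose.and self_mem_nhdsWithin).exists
  exact (hf hs).not_gt hst

end UniformlySeparated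

section HeavisideGram

variable {𝕜 E : Type*} [RCLike 𝕜] [SeminormedAddCommGroup E] [InnerProductSpace 𝕜 E]

theorem inv_le_norm_of_one_le_norm_inner {x y : E} {γ : ℝ} (h : 1 ≤ ‖(inner 𝕜 x y : 𝕜)‖)
    (hy : ‖y‖ ≤ γ) : γ⁻¹ ≤ ‖x‖ := by
  rcases le_or_gt γ 0 with hγ | hγ
  · exact (inv_nonpos.2 hγ).trans (norm_nonneg x)
  · rw [inv_le_iff_one_le_mul₀ hγ]
    calc (1 : ℝ) ≤ ‖(inner 𝕜 x y : 𝕜)‖ := h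
      _ ≤ ‖x‖ * ‖y‖ := norm_inner_le_norm x y
      _ ≤ ‖x‖ * γ := by gcongr

variable {v w : ℝ → E}

theorem inner_sub_left_eq_one_of_heaviside
    (hrep : ∀ s t : ℝ, (inner 𝕜 (v s) (w t) : 𝕜) = if t ≤ s then 1 else 0) {a b : ℝ}
    (hba : b < a) : (inner 𝕜 (v a - v b) (w a) : 𝕜) = 1 := by
  rw [inner_sub_left, hrep, hrep, if_pos le_rfl, if_neg hba.not_ge, sub_zero]

theorem inner_sub_right_eq_one_of_heaviside
    (hrep : ∀ s t : ℝ, (inner 𝕜 (v s) (w t) : 𝕜) = if t ≤ s then 1 else 0) {a b : ℝ}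
    (hab : a < b) : (inner 𝕜 (v a) (w a - w b) : 𝕜) = 1 := by
  rw [inner_sub_right, hrep, hrep, if_pos le_rfl, if_neg hab.not_ge, sub_zero]

theorem pairwise_inv_le_dist_left_of_heaviside
    (hrep : ∀ s t : ℝ, (inner 𝕜 (v s) (w t) : 𝕜) = if t ≤ s then 1 else 0) {γ : ℝ}
    (hw : ∀ s, ‖w s‖ ≤ γ) : Pairwise fun a b => γ⁻¹ ≤ dist (v a) (v b) := by
  have key : ∀ ⦃a b : ℝ⦄, b < a → γ⁻¹ ≤ dist (v a) (v b) := fun a b hba => by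
    rw [dist_eq_norm]
    refine inv_le_norm_of_one_le_norm_inner (𝕜 := 𝕜) ?_ (hw a)
    rw [inner_sub_left_eq_one_of_heaviside hrep hba, norm_one]
  intro a b hab
  rcases hab.lt_or_gt with hlt | hgt
  · exact dist_comm (v a) (v b) ▸ key hlt
  · exact key hgt

theorem pairwise_inv_le_dist_right_of_heaviside
    (hrep : ∀ s t : ℝ, (inner 𝕜 (v s) (w t) : 𝕜) = if t ≤ s then 1 else 0) {γ : ℝ}
    (hv : ∀ s, ‖v s‖ ≤ γ) : Pairwise fun a b => γ⁻¹ ≤ dist (w a) (w b) := by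
  have key : ∀ ⦃a b : ℝ⦄, a < b → γ⁻¹ ≤ dist (w a) (w b) := fun a b hab => by
    rw [dist_eq_norm]
    refine inv_le_norm_of_one_le_norm_inner (𝕜 := 𝕜) ?_ (hv a)
    rw [norm_inner_symm, inner_sub_right_eq_one_of_heaviside hrep hab, norm_one]
  intro a b hab
  rcases hab.lt_or_gt with hlt | hgt
  · exact key hlt
  · exact dist_comm (w a) (w b) ▸ key hgt

end HeavisideGram

theorem stmt3_general {H : Type*} [NormedAddCommGroup H] [InnerProductSpace ℂ H]
    (v w : ℝ → H) (γ : ℝ)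
    (hrep : ∀ s t : ℝ, (inner ℂ (v s) (w t) : ℂ) = if t ≤ s then 1 else 0)
    (hb : ∀ s : ℝ, max ‖v s‖ ‖w s‖ ≤ γ) :
    ¬ TopologicalSpace.SeparableSpace H ∧
      (∀ t : ℝ, ¬ ContinuousAt v t) ∧ (∀ t : ℝ, ¬ ContinuousAt w t) := by
  have hv : ∀ s, ‖v s‖ ≤ γ := fun s => (le_max_left _ _).trans (hb s)
  have hw : ∀ s, ‖w s‖ ≤ γ := fun s => (le_max_right _ _).trans (hb s)
  have hw0 : w 0 ≠ 0 := fun h => by simpa [h] using hrep 0 0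
  have hγ : 0 < γ⁻¹ := inv_pos.2 ((norm_pos_iff.2 hw0).trans_le (hw 0))
  have hvsep := pairwise_inv_le_dist_left_of_heaviside hrep hw
  have hwsep := pairwise_inv_le_dist_right_of_heaviside hrep hv
  exact ⟨fun _ => not_countable (hvsep.countable_of_le_dist hγ),
    fun t => not_continuousAt_of_pairwise_le_dist hγ hvsep t,
    fun t => not_continuousAt_of_pairwise_le_dist hγ hwsep t⟩

/-- if `(H, v, w)` is a Gram representation (with some finite Gram
constant `γ`) of the matrix `U(s,t) = 1[s ≥ t]`, then `H` is not separable and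
`t ↦ v t`, `t ↦ w t` are discontinuous at every `t ∈ ℝ`. -/
theorem stmt3 {H : Type*} [NormedAddCommGroup H] [InnerProductSpace ℂ H] [CompleteSpace H]
    (v w : ℝ → H) (γ : ℝ)
    (hrep : ∀ s t : ℝ, (inner ℂ (v s) (w t) : ℂ) = if t ≤ s then 1 else 0)
    (hb : ∀ s : ℝ, max ‖v s‖ ‖w s‖ ≤ γ) :
    ¬ TopologicalSpace.SeparableSpace H ∧
      (∀ t : ℝ, ¬ ContinuousAt v t) ∧ (∀ t : ℝ, ¬ ContinuousAt w t) :=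
  stmt3_general v w γ hrep hb
end

section
/- Let H be a complex Hilbert space, γ > 0, and let v, w : ℝ → H satisfy ⟪v_s, w_t⟫ = 1 if s ≥ t and ⟪v_s, w_t⟫ = 0 if s < t, together with sup_{s∈ℝ} ‖v_s‖ ≤ γ. Then for all t, t' ∈ ℝ with t ≠ t', one has ‖w_t − w_{t'}‖ ≥ 1/γ. -/
open scoped InnerProductSpace

theorem one_div_le_norm_of_norm_inner_eq_one {𝕜 E : Type*} [RCLike 𝕜] [SeminormedAddCommGroup E]
    [InnerProductSpace 𝕜 E] {x y : E} {γ : ℝ} (hx : ‖x‖ ≤ γ) (hxy : ‖⟪x, y⟫_𝕜‖ = 1) :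
    1 / γ ≤ ‖y‖ := by
  have h : 1 ≤ γ * ‖y‖ := calc
    1 = ‖⟪x, y⟫_𝕜‖ := hxy.symm
    _ ≤ ‖x‖ * ‖y‖ := norm_inner_le_norm x y
    _ ≤ γ * ‖y‖ := by gcongr
  have hγ : 0 < γ := pos_of_mul_pos_left (one_pos.trans_le h) (norm_nonneg y)
  rwa [div_le_iff₀ hγ, mul_comm]

theorem norm_inner_sub_eq_one_of_inner_eq_ite {𝕜 E ι : Type*} [RCLike 𝕜]
    [SeminormedAddCommGroup E] [InnerProductSpace 𝕜 E] [LinearOrder ι] {v w : ι → E}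
    (hrep : ∀ s t, ⟪v s, w t⟫_𝕜 = if t ≤ s then 1 else 0) {t t' : ι} (hne : t ≠ t') :
    ‖⟪v (min t t'), w t - w t'⟫_𝕜‖ = 1 := by
  rw [inner_sub_right, hrep, hrep]
  rcases hne.lt_or_gt with h | h
  · simp [min_eq_left h.le, h.not_ge]
  · simp [min_eq_right h.le, h.not_ge]

theorem stmt4_general {H : Type*} [NormedAddCommGroup H] [InnerProductSpace ℂ H]
    (v w : ℝ → H) (γ : ℝ)
    (hrep : ∀ s t : ℝ, (inner ℂ (v s) (w t) : ℂ) = if t ≤ s then 1 else 0)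
    (hb : ∀ s : ℝ, ‖v s‖ ≤ γ) :
    ∀ t t' : ℝ, t ≠ t' → 1 / γ ≤ ‖w t - w t'‖ := fun _ _ hne =>
  one_div_le_norm_of_norm_inner_eq_one (hb _) (norm_inner_sub_eq_one_of_inner_eq_ite hrep hne)

/-- if `⟪v_s, w_t⟫ = 1` for `s ≥ t`, `= 0` for `s < t`, and `‖v_s‖ ≤ γ`
for all `s`, then `‖w_t − w_{t'}‖ ≥ 1/γ` whenever `t ≠ t'`. -/
theorem stmt4 {H : Type*} [NormedAddCommGroup H] [InnerProductSpace ℂ H] [CompleteSpace H]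
    (v w : ℝ → H) (γ : ℝ) (hγ : 0 < γ)
    (hrep : ∀ s t : ℝ, (inner ℂ (v s) (w t) : ℂ) = if t ≤ s then 1 else 0)
    (hb : ∀ s : ℝ, ‖v s‖ ≤ γ) :
    ∀ t t' : ℝ, t ≠ t' → 1 / γ ≤ ‖w t - w t'‖ :=
  stmt4_general v w γ hrep hb
end

section
/- Let β > 0, let μ be a nonzero finite Borel measure on ℝ^d, and let E : ℝ^d → ℝ be bounded and measurable. Then the fermionic covariance C (the case h ≡ 1), regarded as an (X_d×X_d)-matrix with X_d = [0,β)×ℝ^d, has no Gram representation (H,v,w) with any finite Gram constant on a separable Hilbert space H. -/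
open MeasureTheory

/-- The Fermi function `f_β(E) = (1+e^{βE})⁻¹`. -/
noncomputable def fermiF (β E : ℝ) : ℝ := (1 + Real.exp (β * E))⁻¹

/-- The function `𝐂(τ,E)`: equal to `−e^{−τE}(1−f_β(E))` for `0 < τ ≤ β` and to
`e^{−τE} f_β(E)` for `−β < τ ≤ 0`, extended `2β`-periodically in `τ`
(the shift `τ - 2β⌈(τ-β)/(2β)⌉` reduces `τ` to the window `(−β, β]`). -/
noncomputable def fermiC (β τ E : ℝ) : ℝ :=
  let τ' := τ - 2 * β * (⌈(τ - β) / (2 * β)⌉ : ℤ)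
  if 0 < τ' then -Real.exp (-τ' * E) * (1 - fermiF β E)
  else Real.exp (-τ' * E) * fermiF β E

/-- The fermionic covariance
`C^{(h)}((t,x),(t',x')) = ∫ h(p) e^{i p·(x−x')} 𝐂(t−t', E(p)) dμ(p)`. -/
noncomputable def fermiCov {d : ℕ} (β : ℝ) (μ : Measure (EuclideanSpace ℝ (Fin d)))
    (E h : EuclideanSpace ℝ (Fin d) → ℝ)
    (x y : ℝ × EuclideanSpace ℝ (Fin d)) : ℂ :=
  ∫ p, (h p : ℂ) * Complex.exp (Complex.I * ((inner ℝ p (x.2 - y.2) : ℝ) : ℂ)) *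
      ((fermiC β (x.1 - y.1) (E p) : ℝ) : ℂ) ∂μ

/-- The covariance as an `(X_d × X_d)`-matrix, `X_d = [0,β) × ℝ^d`. -/
noncomputable def fermiCovMat {d : ℕ} (β : ℝ) (μ : Measure (EuclideanSpace ℝ (Fin d)))
    (E h : EuclideanSpace ℝ (Fin d) → ℝ)
    (x y : ↥(Set.Ico (0 : ℝ) β) × EuclideanSpace ℝ (Fin d)) : ℂ :=
  fermiCov β μ E h (x.1.1, x.2) (y.1.1, y.2)

/-!
On the slice `x = 0` the covariance is real valued: its diagonal is the constant
`c = ∫ f_β(E p) dμ > 0`, while `C((t,0),(s,0)) = ∫ 𝐂(t - s, E p) dμ ≤ 0` for `s < t`.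
Hence `c ≤ Re (C((t,0),(t,0)) - C((t,0),(s,0))) = Re ⟪v (t,0), w (t,0) - w (s,0)⟫`, which is at
most `γ ‖w (t,0) - w (s,0)‖`. So `t ↦ w (t,0)` is a uniformly separated family indexed by the
uncountable set `[0,β)`, which a separable space cannot contain.
-/

theorem countable_of_forall_le_dist {α ι : Type*} [PseudoMetricSpace α]
    [TopologicalSpace.SeparableSpace α] {f : ι → α} {δ : ℝ} (hδ : 0 < δ)
    (hf : Pairwise fun i j => δ ≤ dist (f i) (f j)) : Countable ι := by
  refine Pairwise.countable_of_isOpen_disjoint (s := fun i => Metric.ball (f i) (δ / 2))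
    (fun i j hij => Metric.ball_disjoint_ball ?_) (fun _ => Metric.isOpen_ball)
    (fun i => ⟨f i, Metric.mem_ball_self (half_pos hδ)⟩)
  linarith [hf hij]

theorem countable_of_gram_of_diag_gap {X H : Type*} [LinearOrder X] [NormedAddCommGroup H]
    [InnerProductSpace ℂ H] [TopologicalSpace.SeparableSpace H] {M : X → X → ℂ} {v w : X → H}
    {γ c : ℝ} (hM : ∀ x y, M x y = inner ℂ (v x) (w y)) (hv : ∀ x, ‖v x‖ ≤ γ) (hc : 0 < c)
    (hgap : ∀ s t, s < t → c ≤ (M t t - M t s).re) : Countable X := by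
  -- `max γ 1` keeps the separation constant `c / γ'` positive without a sign hypothesis on `γ`
  set γ' := max γ 1
  have hγ' : 0 < γ' := lt_max_of_lt_right one_pos
  have hsep : ∀ s t, s < t → c / γ' ≤ dist (w s) (w t) := by
    intro s t hst
    rw [div_le_iff₀ hγ', dist_comm, dist_eq_norm]
    calc c ≤ (M t t - M t s).re := hgap s t hst
      _ = (inner ℂ (v t) (w t - w s)).re := by rw [hM, hM, inner_sub_right]
      _ ≤ ‖v t‖ * ‖w t - w s‖ := (Complex.re_le_norm _).trans (norm_inner_le_norm _ _)
      _ ≤ ‖w t - w s‖ * γ' := by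
        rw [mul_comm]; gcongr; exact (hv t).trans (le_max_left _ _)
  refine countable_of_forall_le_dist (f := w) (div_pos hc hγ') fun s t hst => ?_
  rcases hst.lt_or_gt with h | h
  · exact hsep s t h
  · rw [dist_comm]; exact hsep t s h

lemma fermiF_pos (β E : ℝ) : 0 < fermiF β E := by
  unfold fermiF; positivity

lemma fermiF_le_one (β E : ℝ) : fermiF β E ≤ 1 :=
  inv_le_one_of_one_le₀ (le_add_of_nonneg_right (Real.exp_pos _).le)

lemma integrable_fermiF_comp {α : Type*} [MeasurableSpace α] {μ : Measure α} [IsFiniteMeasure μ]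
    (β : ℝ) {E : α → ℝ} (hE : Measurable E) : Integrable (fun p => fermiF β (E p)) μ := by
  have hcont : Continuous (fermiF β) :=
    (continuous_const.add (continuous_const.mul continuous_id).rexp).inv₀ fun _ =>
      (add_pos one_pos (Real.exp_pos _)).ne'
  refine (integrable_const (1 : ℝ)).mono' (hcont.measurable.comp hE).aestronglyMeasurable ?_
  filter_upwards with p
  rw [Real.norm_eq_abs, abs_of_pos (fermiF_pos β (E p))]
  exact fermiF_le_one β (E p)

lemma integral_fermiF_comp_pos {α : Type*} [MeasurableSpace α] {μ : Measure α} [IsFiniteMeasure μ]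
    (hμ : μ ≠ 0) (β : ℝ) {E : α → ℝ} (hE : Measurable E) : 0 < ∫ p, fermiF β (E p) ∂μ := by
  rw [integral_pos_iff_support_of_nonneg (fun p => (fermiF_pos β (E p)).le)
    (integrable_fermiF_comp β hE)]
  simpa [Function.support, (fermiF_pos β _).ne', Measure.measure_univ_eq_zero,
    pos_iff_ne_zero] using hμ

lemma fermiC_of_mem_Ioc {β τ : ℝ} (hβ : 0 < β) (hτ : τ ∈ Set.Ioc (-β) β) (E : ℝ) :
    fermiC β τ E = if 0 < τ then -Real.exp (-τ * E) * (1 - fermiF β E)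
      else Real.exp (-τ * E) * fermiF β E := by
  have hceil : ⌈(τ - β) / (2 * β)⌉ = 0 := by
    rw [Int.ceil_eq_zero_iff]
    constructor
    · rw [lt_div_iff₀ (by linarith)]; linarith [hτ.1]
    · exact div_nonpos_of_nonpos_of_nonneg (by linarith [hτ.2]) (by linarith)
  simp [fermiC, hceil]

lemma fermiC_zero {β : ℝ} (hβ : 0 < β) (E : ℝ) : fermiC β 0 E = fermiF β E := by
  simp [fermiC_of_mem_Ioc hβ ⟨neg_lt_zero.2 hβ, hβ.le⟩]

lemma fermiC_nonpos {β τ : ℝ} (hβ : 0 < β) (hτ : τ ∈ Set.Ioc 0 β) (E : ℝ) :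
    fermiC β τ E ≤ 0 := by
  rw [fermiC_of_mem_Ioc hβ ⟨by linarith [hτ.1], hτ.2⟩, if_pos hτ.1]
  exact mul_nonpos_of_nonpos_of_nonneg (neg_nonpos.2 (Real.exp_pos _).le)
    (sub_nonneg.2 (fermiF_le_one β E))

lemma fermiCovMat_one_of_snd_eq {d : ℕ} (β : ℝ) (μ : Measure (EuclideanSpace ℝ (Fin d)))
    (E : EuclideanSpace ℝ (Fin d) → ℝ) (a b : Set.Ico (0 : ℝ) β) (x : EuclideanSpace ℝ (Fin d)) :
    fermiCovMat β μ E (fun _ => 1) (a, x) (b, x) = ((∫ p, fermiC β (a - b) (E p) ∂μ : ℝ) : ℂ) := by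
  simp only [fermiCovMat, fermiCov, sub_self, inner_zero_right, Complex.ofReal_zero, mul_zero,
    Complex.exp_zero, mul_one, Complex.ofReal_one, one_mul]
  exact integral_complex_ofReal

theorem fermiCovMat_one_diag_gap {d : ℕ} {β : ℝ} (hβ : 0 < β)
    (μ : Measure (EuclideanSpace ℝ (Fin d))) (E : EuclideanSpace ℝ (Fin d) → ℝ)
    (x : EuclideanSpace ℝ (Fin d)) {s t : Set.Ico (0 : ℝ) β} (hst : s < t) :
    ∫ p, fermiF β (E p) ∂μ ≤
      (fermiCovMat β μ E (fun _ => 1) (t, x) (t, x) -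
        fermiCovMat β μ E (fun _ => 1) (t, x) (s, x)).re := by
  have hoff : ∫ p, fermiC β (t - s) (E p) ∂μ ≤ 0 :=
    integral_nonpos fun p => fermiC_nonpos hβ ⟨sub_pos.2 hst, by linarith [s.2.1, t.2.2]⟩ _
  simp only [fermiCovMat_one_of_snd_eq, Complex.sub_re, Complex.ofReal_re, sub_self,
    fermiC_zero hβ]
  linarith

theorem not_countable_Ico {a b : ℝ} (hab : a < b) : ¬ Countable (Set.Ico a b) := fun _ =>
  Cardinal.aleph0_lt_continuum.not_ge (Cardinal.mk_Ico_real hab ▸ Cardinal.mk_le_aleph0)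

theorem stmt5_general {d : ℕ} (β : ℝ) (hβ : 0 < β)
    (μ : Measure (EuclideanSpace ℝ (Fin d))) [IsFiniteMeasure μ] (hμ : μ ≠ 0)
    (E : EuclideanSpace ℝ (Fin d) → ℝ) (hE : Measurable E)
    (H : Type*) [NormedAddCommGroup H] [InnerProductSpace ℂ H]
    [TopologicalSpace.SeparableSpace H]
    (v w : (↥(Set.Ico (0 : ℝ) β) × EuclideanSpace ℝ (Fin d)) → H) (γ : ℝ) :
    ¬ ((∀ x y, fermiCovMat β μ E (fun _ => 1) x y = inner ℂ (v x) (w y)) ∧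
        ∀ x, max ‖v x‖ ‖w x‖ ≤ γ) := by
  rintro ⟨hrep, hbd⟩
  exact not_countable_Ico hβ <|
    countable_of_gram_of_diag_gap (M := fun a b => fermiCovMat β μ E (fun _ => 1) (a, 0) (b, 0))
      (v := fun a => v (a, 0)) (w := fun a => w (a, 0)) (fun a b => hrep (a, 0) (b, 0))
      (fun a => (le_max_left _ _).trans (hbd (a, 0))) (integral_fermiF_comp_pos hμ β hE)
      fun _ _ hst => fermiCovMat_one_diag_gap hβ μ E 0 hst

/-- Corollary 1 of the paper: for `β > 0`, `μ` a nonzero finite Borel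
measure on `ℝ^d` and `E` bounded measurable, the fermionic covariance `C` (the case
`h ≡ 1`), as an `(X_d × X_d)`-matrix with `X_d = [0,β) × ℝ^d`, has no Gram
representation `(H, v, w)` with any finite Gram constant `γ` on a separable
Hilbert space `H`. -/
theorem stmt5 {d : ℕ} (β : ℝ) (hβ : 0 < β)
    (μ : Measure (EuclideanSpace ℝ (Fin d))) [IsFiniteMeasure μ] (hμ : μ ≠ 0)
    (E : EuclideanSpace ℝ (Fin d) → ℝ) (hE : Measurable E) (hEb : ∃ B, ∀ p, |E p| ≤ B)
    (H : Type*) [NormedAddCommGroup H] [InnerProductSpace ℂ H] [CompleteSpace H]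
    [TopologicalSpace.SeparableSpace H]
    (v w : (↥(Set.Ico (0 : ℝ) β) × EuclideanSpace ℝ (Fin d)) → H) (γ : ℝ) :
    ¬ ((∀ x y, fermiCovMat β μ E (fun _ => 1) x y = inner ℂ (v x) (w y)) ∧
        ∀ x, max ‖v x‖ ‖w x‖ ≤ γ) :=
  stmt5_general β hβ μ hμ E hE H v w γ
end

section
/- Let (J, ≻) be a linearly ordered set, let φ, φ' : ℕ → J, and let H be a complex Hilbert space. Then for all n ∈ ℕ and all v_1,…,v_n, w_1,…,w_n ∈ H, |det((⟪v_k, w_l⟫ · 1[φ'(k) ≻ φ(l)])_{k,l=1}^n)| ≤ Π_{k=1}^n ‖v_k‖·‖w_k‖. -/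
/-!
Induction on `n`. Let `l₀` be a column at which `φ` is maximal and `p k` the condition
`φ l₀ < φ' k`: the rows with `p k` are unmasked, and all other rows vanish in column `l₀`.
If the `v k` with `p k` are linearly dependent, so are these rows. Otherwise replace them by an
orthonormal basis of their span in which only one vector is not orthogonal to `w l₀`; this row
operation multiplies the determinant by the determinant of a coordinate matrix, which Hadamard's
inequality bounds by `∏_{p k} ‖v k‖`. Column `l₀` now has at most one nonzero entry, of norm at
most `‖w l₀‖`, and Laplace expansion along it leaves a masked Gram matrix of size `n`.
-/

open Finset Matrix
open scoped InnerProductSpace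

theorem Matrix.det_eq_det_mul_det_of_row_eq_sum {R ι : Type*} [CommRing R] [Fintype ι]
    [DecidableEq ι] (p : ι → Prop) [DecidablePred p] {M N : Matrix ι ι R}
    (a : Matrix {i // p i} {i // p i} R) (hp : ∀ i : {i // p i}, M i = ∑ j, a i j • N j)
    (hnp : ∀ i, ¬ p i → M i = N i) : M.det = a.det * N.det := by
  set e := Equiv.sumCompl p
  have hM : M = reindex e e (fromBlocks a 0 0 1) * N := by
    ext i l
    rw [mul_apply, ← e.sum_comp, Fintype.sum_sum_type]
    by_cases hi : p i
    · simp [e, Equiv.sumCompl_symm_apply_of_pos hi, hp ⟨i, hi⟩, Finset.sum_apply]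
    · simp [e, Equiv.sumCompl_symm_apply_of_neg hi, hnp i hi, one_apply]
  rw [hM, det_mul, det_reindex_self, det_fromBlocks_zero₂₁, det_one, mul_one]

theorem Matrix.exists_norm_det_eq_of_subsingleton_column {𝕜 : Type*} [NormedField 𝕜] {n : ℕ}
    (M : Matrix (Fin (n + 1)) (Fin (n + 1)) 𝕜) (l : Fin (n + 1))
    (h : {k | M k l ≠ 0}.Subsingleton) :
    ∃ k, ‖M.det‖ = ‖M k l‖ * ‖(M.submatrix k.succAbove l.succAbove).det‖ := by
  by_cases hzero : ∀ k, M k l = 0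
  · exact ⟨0, by rw [det_eq_zero_of_column_eq_zero l hzero, hzero]; simp⟩
  obtain ⟨k, hk⟩ := not_forall.mp hzero
  refine ⟨k, ?_⟩
  rw [det_succ_column M l, Finset.sum_eq_single k, norm_mul, norm_mul]
  · simp
  · intro k' _ hk'
    have : M k' l = 0 := by_contra fun hne => hk' (h hne hk)
    rw [this, mul_zero, zero_mul]
  · simp

section

variable {𝕜 : Type*} [RCLike 𝕜] {E : Type*} [NormedAddCommGroup E] [InnerProductSpace 𝕜 E]

theorem OrthonormalBasis.norm_det_le_prod_norm {ι : Type*} [Fintype ι] [DecidableEq ι]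
    (b : OrthonormalBasis ι 𝕜 E) (f : ι → E) : ‖b.toBasis.det f‖ ≤ ∏ i, ‖f i‖ := by
  let _ : LinearOrder ι := LinearOrder.lift' _ (Fintype.equivFin ι).injective
  let _ : LocallyFiniteOrderBot ι := .ofIic' ι (fun i => {j | j ≤ i}) (by simp)
  have : FiniteDimensional 𝕜 E := b.toBasis.finiteDimensional_of_finite
  set g := InnerProductSpace.gramSchmidtOrthonormalBasis (Module.finrank_eq_card_basis b.toBasis) f
  rw [b.toBasis.det_apply, ← b.toBasis.toMatrix_mul_toMatrix g.toBasis, det_mul,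
    ← Module.Basis.det_apply, ← Module.Basis.det_apply, g.coe_toBasis, norm_mul,
    b.det_to_matrix_orthonormalBasis g, one_mul,
    InnerProductSpace.gramSchmidtOrthonormalBasis_det, norm_prod]
  gcongr with i
  calc ‖⟪g i, f i⟫_𝕜‖ ≤ ‖g i‖ * ‖f i‖ := norm_inner_le_norm _ _
    _ = ‖f i‖ := by rw [g.orthonormal.1 i, one_mul]

theorem Submodule.exists_orthonormalBasis_subsingleton_inner_ne_zero {ι : Type*} [Fintype ι]
    (V : Submodule 𝕜 E) [FiniteDimensional 𝕜 V] (hcard : Module.finrank 𝕜 V = Fintype.card ι)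
    (w : E) : ∃ b : OrthonormalBasis ι 𝕜 V, {i | ⟪(b i : E), w⟫_𝕜 ≠ 0}.Subsingleton := by
  set u := V.orthogonalProjectionOnto w
  have inner_eq (x : V) : ⟪(x : E), w⟫_𝕜 = ⟪x, u⟫_𝕜 :=
    (V.inner_orthogonalProjectionOnto_eq_of_mem_left x w).symm
  by_cases hu : u = 0
  · refine ⟨(stdOrthonormalBasis 𝕜 V).reindex (Fintype.equivFinOfCardEq hcard.symm).symm, ?_⟩
    simp [inner_eq, hu]
  obtain ⟨i₀⟩ : Nonempty ι := by
    rw [← Fintype.card_pos_iff, ← hcard]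
    exact Module.finrank_pos_iff_exists_ne_zero.mpr ⟨u, hu⟩
  have hunit : Orthonormal 𝕜 (Set.domRestrict {i₀} fun _ => (‖u‖⁻¹ : 𝕜) • u) := by
    refine ⟨fun _ => ?_, fun i j hij => (hij (Subsingleton.elim i j)).elim⟩
    simp [norm_smul, hu]
  obtain ⟨b, hb⟩ := hunit.exists_orthonormalBasis_extension_of_card_eq hcard
  refine ⟨b, Set.subsingleton_of_forall_eq i₀ fun i hi => ?_⟩
  by_contra hne
  apply hi
  have : ⟪b i, b i₀⟫_𝕜 = 0 := b.orthonormal.2 hne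
  rw [hb i₀ rfl, inner_smul_right] at this
  rw [inner_eq]
  simpa [hu] using this

variable {J : Type*} [LinearOrder J] {ι : Type*}

variable (𝕜) in
def maskedGram (φ φ' : ι → J) (v w : ι → E) : Matrix ι ι 𝕜 :=
  Matrix.of fun k l => ⟪v k, w l⟫_𝕜 * if φ l < φ' k then 1 else 0

section

variable {φ φ' : ι → J} {v w : ι → E}

theorem maskedGram_apply_of_lt {k l : ι} (h : φ l < φ' k) :
    maskedGram 𝕜 φ φ' v w k l = ⟪v k, w l⟫_𝕜 := by
  simp [maskedGram, h]

theorem maskedGram_apply_of_not_lt {k l : ι} (h : ¬ φ l < φ' k) :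
    maskedGram 𝕜 φ φ' v w k l = 0 := by
  simp [maskedGram, h]

theorem norm_maskedGram_apply_le (k l : ι) : ‖maskedGram 𝕜 φ φ' v w k l‖ ≤ ‖v k‖ * ‖w l‖ := by
  by_cases h : φ l < φ' k
  · rw [maskedGram_apply_of_lt h]
    exact norm_inner_le_norm _ _
  · rw [maskedGram_apply_of_not_lt h, norm_zero]
    positivity

theorem det_maskedGram_eq_zero_of_not_linearIndependent [Fintype ι] [DecidableEq ι]
    {p : ι → Prop} [DecidablePred p] (hp : ∀ k, p k → ∀ l, φ l < φ' k)
    (hdep : ¬ LinearIndependent 𝕜 fun k : {k // p k} => v k) :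
    (maskedGram 𝕜 φ φ' v w).det = 0 := by
  obtain ⟨c, hc, k₀, hk₀⟩ := Fintype.not_linearIndependent_iff.mp hdep
  let d : ι → 𝕜 := fun k => if h : p k then star (c ⟨k, h⟩) else 0
  refine exists_vecMul_eq_zero_iff.mp ⟨d, fun hd => hk₀ ?_, funext fun l => ?_⟩
  · simpa [d, k₀.2] using congrFun hd k₀
  have hpos (k : {k // p k}) : d k * maskedGram 𝕜 φ φ' v w k l = ⟪c k • v k, w l⟫_𝕜 := by
    simp [d, k.2, maskedGram_apply_of_lt (hp _ k.2 l), inner_smul_left]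
  have hneg (k : {k // ¬ p k}) : d k * maskedGram 𝕜 φ φ' v w k l = 0 := by
    simp [d, k.2]
  rw [vecMul, dotProduct, ← Fintype.sum_subtype_add_sum_subtype p]
  simp only [hpos, hneg, ← sum_inner, hc, inner_zero_left, sum_const_zero, add_zero,
    Pi.zero_apply]

theorem norm_det_maskedGram_le_of_orthonormalBasis [Fintype ι] [DecidableEq ι]
    {p : ι → Prop} [DecidablePred p] (hp : ∀ k, p k → ∀ l, φ l < φ' k) {V : Submodule 𝕜 E}
    (b : OrthonormalBasis {k // p k} 𝕜 V) (hv : ∀ k, p k → v k ∈ V) :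
    ‖(maskedGram 𝕜 φ φ' v w).det‖ ≤ (∏ k : {k // p k}, ‖v k‖) *
      ‖(maskedGram 𝕜 φ φ' (fun k => if h : p k then (b ⟨k, h⟩ : E) else v k) w).det‖ := by
  set vV : {k // p k} → V := fun k => ⟨v k, hv k k.2⟩
  let a : Matrix {k // p k} {k // p k} 𝕜 := of fun k j => ⟪v k, (b j : E)⟫_𝕜
  have hexpand (k : {k // p k}) (x : E) : ⟪v k, x⟫_𝕜 = ∑ j, a k j * ⟪(b j : E), x⟫_𝕜 :=
    calc ⟪v k, x⟫_𝕜 = ⟪((∑ j, ⟪b j, vV k⟫_𝕜 • b j : V) : E), x⟫_𝕜 := by rw [b.sum_repr']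
      _ = ∑ j, a k j * ⟪(b j : E), x⟫_𝕜 := by simp [a, vV, sum_inner, inner_smul_left]
  have hmatrix : b.toBasis.toMatrix vV = aᴴ := by
    ext j k
    rw [Module.Basis.toMatrix_apply, OrthonormalBasis.coe_toBasis_repr_apply,
      OrthonormalBasis.repr_apply_apply]
    simp [a, vV]
  rw [det_eq_det_mul_det_of_row_eq_sum p a, norm_mul]
  · gcongr
    calc ‖a.det‖ = ‖b.toBasis.det vV‖ := by
          rw [Module.Basis.det_apply, hmatrix, det_conjTranspose, norm_star]
      _ ≤ ∏ k : {k // p k}, ‖v k‖ := b.norm_det_le_prod_norm vV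
  · intro k
    funext l
    rw [maskedGram_apply_of_lt (hp _ k.2 l), hexpand k, Finset.sum_apply]
    refine Finset.sum_congr rfl fun j _ => ?_
    simp [maskedGram_apply_of_lt (hp _ j.2 l), j.2]
  · intro k hk
    funext l
    simp [maskedGram, hk]

theorem subsingleton_maskedGram_column_ne_zero [Fintype ι] {p : ι → Prop} [DecidablePred p] {l₀ : ι}
    (hp : ∀ k, φ l₀ < φ' k → p k) {V : Submodule 𝕜 E} (b : OrthonormalBasis {k // p k} 𝕜 V)
    (hb : {i | ⟪(b i : E), w l₀⟫_𝕜 ≠ 0}.Subsingleton) :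
    {k : ι | maskedGram 𝕜 φ φ' (fun k => if h : p k then (b ⟨k, h⟩ : E) else v k) w k l₀ ≠ 0}
      |>.Subsingleton := by
  set v' := fun k => if h : p k then (b ⟨k, h⟩ : E) else v k
  have hinner (k : ι) (hk : maskedGram 𝕜 φ φ' v' w k l₀ ≠ 0) :
      ∃ h : p k, ⟪(b ⟨k, h⟩ : E), w l₀⟫_𝕜 ≠ 0 := by
    by_cases h : φ l₀ < φ' k
    · exact ⟨hp k h, by simpa [maskedGram_apply_of_lt h, v', hp k h] using hk⟩
    · exact (hk (maskedGram_apply_of_not_lt h)).elim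
  intro k hk k' hk'
  obtain ⟨h, hne⟩ := hinner k hk
  obtain ⟨h', hne'⟩ := hinner k' hk'
  exact congrArg Subtype.val (hb hne hne')

end

theorem prod_norm_mul_prod_norm_dite_of_norm_eq_one [Fintype ι] {p : ι → Prop}
    [DecidablePred p] {v : ι → E} {b : {k // p k} → E} (hb : ∀ k, ‖b k‖ = 1) :
    (∏ k : {k // p k}, ‖v k‖) * ∏ k, ‖if h : p k then b ⟨k, h⟩ else v k‖ = ∏ k, ‖v k‖ := by
  have hp (k : {k // p k}) : ‖if h : p k then b ⟨k, h⟩ else v k‖ = 1 := by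
    rw [dif_pos k.2, hb]
  have hnp (k : {k // ¬ p k}) : ‖if h : p k then b ⟨k, h⟩ else v k‖ = ‖v k‖ := by
    rw [dif_neg k.2]
  rw [← Fintype.prod_subtype_mul_prod_subtype p fun k => ‖if h : p k then b ⟨k, h⟩ else v k‖,
    ← Fintype.prod_subtype_mul_prod_subtype p fun k => ‖v k‖]
  simp only [hp, hnp, prod_const_one, one_mul]

theorem norm_det_maskedGram_le {n : ℕ} (φ φ' : Fin n → J) (v w : Fin n → E) :
    ‖(maskedGram 𝕜 φ φ' v w).det‖ ≤ (∏ k, ‖v k‖) * ∏ l, ‖w l‖ := by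
  induction n with
  | zero => simp
  | succ n ih =>
  obtain ⟨l₀, -, hl₀⟩ := exists_max_image univ φ univ_nonempty
  let p : Fin (n + 1) → Prop := fun k => φ l₀ < φ' k
  have hfull (k) (hk : p k) (l) : φ l < φ' k := (hl₀ l (mem_univ l)).trans_lt hk
  by_cases hdep : ¬ LinearIndependent 𝕜 fun k : {k // p k} => v k
  · rw [det_maskedGram_eq_zero_of_not_linearIndependent hfull hdep, norm_zero]
    positivity
  rw [not_not] at hdep
  let V := Submodule.span 𝕜 (Set.range fun k : {k // p k} => v k)
  have : FiniteDimensional 𝕜 V := .span_of_finite 𝕜 (Set.finite_range _)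
  obtain ⟨b, hb⟩ :=
    V.exists_orthonormalBasis_subsingleton_inner_ne_zero (finrank_span_eq_card hdep) (w l₀)
  let v' k := if h : p k then (b ⟨k, h⟩ : E) else v k
  obtain ⟨k₀, hk₀⟩ := exists_norm_det_eq_of_subsingleton_column _ l₀
    (subsingleton_maskedGram_column_ne_zero (fun _ => id) b hb)
  have hnorm : (∏ k : {k // p k}, ‖v k‖) * ∏ k, ‖v' k‖ = ∏ k, ‖v k‖ :=
    prod_norm_mul_prod_norm_dite_of_norm_eq_one (b := fun k => (b k : E)) b.orthonormal.1
  calc ‖(maskedGram 𝕜 φ φ' v w).det‖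
      ≤ (∏ k : {k // p k}, ‖v k‖) * ‖(maskedGram 𝕜 φ φ' v' w).det‖ :=
        norm_det_maskedGram_le_of_orthonormalBasis hfull b fun k hk =>
          Submodule.subset_span ⟨⟨k, hk⟩, rfl⟩
    _ = (∏ k : {k // p k}, ‖v k‖) * (‖maskedGram 𝕜 φ φ' v' w k₀ l₀‖ *
          ‖(maskedGram 𝕜 (φ ∘ l₀.succAbove) (φ' ∘ k₀.succAbove) (v' ∘ k₀.succAbove)
            (w ∘ l₀.succAbove)).det‖) := by
        rw [hk₀]
        rfl
    _ ≤ (∏ k : {k // p k}, ‖v k‖) * ((‖v' k₀‖ * ‖w l₀‖) *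
          ((∏ k, ‖v' (k₀.succAbove k)‖) * ∏ l, ‖w (l₀.succAbove l)‖)) := by
        gcongr
        · exact norm_maskedGram_apply_le _ _
        · exact ih _ _ _ _
    _ = ((∏ k : {k // p k}, ‖v k‖) * ∏ k, ‖v' k‖) * ∏ l, ‖w l‖ := by
        rw [Fin.prod_univ_succAbove _ k₀, Fin.prod_univ_succAbove _ l₀]
        ring
    _ = (∏ k, ‖v k‖) * ∏ l, ‖w l‖ := by rw [hnorm]

end

theorem stmt6_general {J : Type*} [LinearOrder J] (φ φ' : ℕ → J)
    {H : Type*} [NormedAddCommGroup H] [InnerProductSpace ℂ H]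
    (n : ℕ) (v w : Fin n → H) :
    ‖Matrix.det (Matrix.of fun k l : Fin n =>
        (inner ℂ (v k) (w l) : ℂ) * (if φ (l : ℕ) < φ' (k : ℕ) then 1 else 0))‖ ≤
      ∏ k : Fin n, ‖v k‖ * ‖w k‖ := by
  rw [prod_mul_distrib]
  exact norm_det_maskedGram_le (𝕜 := ℂ) (fun l => φ l) (fun k => φ' k) v w

/-- the determinant of the matrix `(⟪v_k, w_l⟫ · 1[φ'(k) ≻ φ(l)])_{k,l}`
is bounded by `∏_k ‖v_k‖·‖w_k‖`. -/
theorem stmt6 {J : Type*} [LinearOrder J] (φ φ' : ℕ → J)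
    {H : Type*} [NormedAddCommGroup H] [InnerProductSpace ℂ H] [CompleteSpace H]
    (n : ℕ) (v w : Fin n → H) :
    ‖Matrix.det (Matrix.of fun k l : Fin n =>
        (inner ℂ (v k) (w l) : ℂ) * (if φ (l : ℕ) < φ' (k : ℕ) then 1 else 0))‖ ≤
      ∏ k : Fin n, ‖v k‖ * ‖w k‖ :=
  stmt6_general φ φ' n v w
end

section
/- Let n, k ∈ ℕ and let A^{(1)}, …, A^{(k)} be complex n×n matrices. Suppose that for each l ∈ {1,…,k} there is γ_l > 0 such that the property Π(A^{(l)}, γ_l) holds. Then the property Π(A^{(1)} + ⋯ + A^{(k)}, γ_1 + ⋯ + γ_k) holds. -/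
/-- The property `Π(A, γ)`: for every `p ∈ {1,…,n}`, all strictly increasing index
sequences `a`, `b` of length `p` in `{1,…,n}` and all vectors `v₁,…,v_p, w₁,…,w_p`
in the closed unit ball of `ℂⁿ`, `|det((⟪v_q, w_r⟫·A_{a_q,b_r})_{q,r})| ≤ γ^(2p)`. -/
def PropPi (n : ℕ) (A : Matrix (Fin n) (Fin n) ℂ) (γ : ℝ) : Prop :=
  ∀ (p : ℕ), 1 ≤ p → p ≤ n → ∀ (a b : Fin p → Fin n), StrictMono a → StrictMono b →
    ∀ (v w : Fin p → EuclideanSpace ℂ (Fin n)),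
      (∀ q, ‖v q‖ ≤ 1) → (∀ q, ‖w q‖ ≤ 1) →
      ‖(Matrix.det (Matrix.of fun q r =>
        (inner ℂ (v q) (w r) : ℂ) * A (a q) (b r)))‖ ≤ γ ^ (2 * p)

/-!
Rows are multilinear, so `det (X + Y)` is the sum over row sets `S` of the determinants of the
matrices taking the rows in `S` from `X` and the others from `Y`. The generalized Laplace
expansion along `S` turns each of these into a signed sum, over column sets `T` with `#T = #S`,
of `det X[S, T] * det Y[Sᶜ, Tᶜ]`. Minors of the matrices `(⟪v_q, w_r⟫ A_{a_q b_r})` are matrices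
of the same kind, so `Π` bounds the terms by `α ^ (2 s) * β ^ (2 (p - s))`, and
`∑ s, (p.choose s * α ^ s * β ^ (p - s)) ^ 2 ≤ ((α + β) ^ p) ^ 2`.
-/

open Finset Equiv Equiv.Perm Matrix

namespace Matrix

variable {ι R : Type*} [Fintype ι] [DecidableEq ι]

theorem det_eq_sum_sign_smul_prod [CommRing R] (M : Matrix ι ι R) :
    M.det = ∑ σ : Perm ι, sign σ • ∏ i, M i (σ i) := by
  rw [← det_transpose, det_apply]; rfl

theorem det_add_eq_sum_det_piecewise [CommRing R] (X Y : Matrix ι ι R) :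
    (X + Y).det = ∑ S : Finset ι, det (S.piecewise X Y) :=
  (detRowAlternating : (ι → R) [⋀^ι]→ₗ[R] R).map_add_univ X Y

end Matrix

section

variable {ι R : Type*} [Fintype ι] [LinearOrder ι] {s t : ℕ}

theorem finSumEquivOfFinset_inl_mem {S : Finset ι} (hS : #S = s) (hSc : #Sᶜ = t) (i : Fin s) :
    finSumEquivOfFinset hS hSc (Sum.inl i) ∈ S := by
  simp [orderEmbOfFin_mem]

theorem finSumEquivOfFinset_inr_notMem {S : Finset ι} (hS : #S = s) (hSc : #Sᶜ = t) (k : Fin t) :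
    finSumEquivOfFinset hS hSc (Sum.inr k) ∉ S := by
  simpa only [finSumEquivOfFinset_inr, mem_compl] using orderEmbOfFin_mem Sᶜ hSc k

theorem image_equivCongr_finSumEquivOfFinset_eq_iff {S T : Finset ι} (hS : #S = s) (hSc : #Sᶜ = t)
    (hT : #T = s) (hTc : #Tᶜ = t) (π : Perm (Fin s ⊕ Fin t)) :
    S.image (equivCongr (finSumEquivOfFinset hS hSc) (finSumEquivOfFinset hT hTc) π) = T ↔
      Set.MapsTo π (Set.range Sum.inl) (Set.range Sum.inl) := by
  set eS := finSumEquivOfFinset hS hSc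
  set eT := finSumEquivOfFinset hT hTc
  have hΦ : ∀ j, equivCongr eS eT π (eS j) = eT (π j) := by simp
  constructor
  · rintro himage _ ⟨j, rfl⟩
    have hmem : eT (π (Sum.inl j)) ∈ T := by
      rw [← hΦ, ← himage]
      exact mem_image_of_mem _ (finSumEquivOfFinset_inl_mem hS hSc j)
    rcases h : π (Sum.inl j) with j' | k
    · exact ⟨j', rfl⟩
    · exact absurd (h ▸ hmem) (finSumEquivOfFinset_inr_notMem hT hTc k)
  · intro hmaps
    refine eq_of_subset_of_card_le (fun y hy => ?_) ?_
    · obtain ⟨x, hx, rfl⟩ := mem_image.mp hy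
      obtain ⟨j, rfl⟩ := eS.surjective x
      rcases j with j | k
      · obtain ⟨j', hj'⟩ := hmaps (Set.mem_range_self j)
        rw [hΦ, ← hj']
        exact finSumEquivOfFinset_inl_mem hT hTc j'
      · exact absurd hx (finSumEquivOfFinset_inr_notMem hS hSc k)
    · rw [card_image_of_injective _ (Equiv.injective _), hS, hT]

namespace Matrix

theorem sum_perm_image_eq_smul_det_mul_det [CommRing R] (M : Matrix ι ι R) {S T : Finset ι}
    (hS : #S = s) (hSc : #Sᶜ = t) (hT : #T = s) (hTc : #Tᶜ = t) :
    ∑ σ ∈ univ.filter (fun σ : Perm ι => S.image σ = T), sign σ • ∏ i, M i (σ i) =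
      sign ((finSumEquivOfFinset hS hSc).symm.trans (finSumEquivOfFinset hT hTc)) •
        ((M.submatrix (S.orderEmbOfFin hS) (T.orderEmbOfFin hT)).det *
          (M.submatrix (Sᶜ.orderEmbOfFin hSc) (Tᶜ.orderEmbOfFin hTc)).det) := by
  set eS := finSumEquivOfFinset hS hSc
  set eT := finSumEquivOfFinset hT hTc
  set Φ := equivCongr eS eT
  have hsign : ∀ π, sign (Φ π) = sign (eS.symm.trans eT) * sign π := by
    intro π
    rw [← sign_permCongr eS π, ← map_mul]
    congr 1
    ext x
    simp [Φ, Perm.mul_apply, permCongr_apply]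
  rw [det_eq_sum_sign_smul_prod, det_eq_sum_sign_smul_prod, sum_mul_sum,
    ← Fintype.sum_prod_type', smul_sum]
  symm
  -- `(τ, ρ) ↦ eT ∘ (τ ⊕ ρ) ∘ eS⁻¹` is a bijection onto the permutations mapping `S` onto `T`.
  refine sum_bij (fun τρ _ => Φ (Perm.sumCongr τρ.1 τρ.2)) ?_ ?_ ?_ ?_
  · intro τρ _
    rw [mem_filter, image_equivCongr_finSumEquivOfFinset_eq_iff]
    exact ⟨mem_univ _, by rintro _ ⟨j, rfl⟩; exact ⟨τρ.1 j, rfl⟩⟩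
  · intro τρ _ τρ' _ h
    exact Perm.sumCongrHom_injective (Φ.injective h)
  · intro σ hσ
    rw [mem_filter, ← Φ.apply_symm_apply σ, image_equivCongr_finSumEquivOfFinset_eq_iff] at hσ
    obtain ⟨τρ, hτρ⟩ := mem_sumCongrHom_range_of_perm_mapsTo_inl hσ.2
    exact ⟨τρ, mem_univ _, by rw [← Φ.apply_symm_apply σ, ← hτρ]; rfl⟩
  · rintro ⟨τ, ρ⟩ _
    rw [hsign, sign_sumCongr, ← Equiv.prod_comp eS, Fintype.prod_sum_type]
    simp only [Φ, equivCongr_apply_apply, symm_apply_apply, Perm.sumCongr_apply, Sum.map_inl,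
      Sum.map_inr, submatrix_apply, smul_mul_smul_comm, mul_smul]
    rfl

theorem norm_det_piecewise_le [NormedCommRing R] {X Y : Matrix ι ι R} {α β : ℝ}
    (hX : ∀ s (c d : Fin s → ι), StrictMono c → StrictMono d →
      ‖(X.submatrix c d).det‖ ≤ α ^ (2 * s))
    (hY : ∀ s (c d : Fin s → ι), StrictMono c → StrictMono d →
      ‖(Y.submatrix c d).det‖ ≤ β ^ (2 * s))
    (S : Finset ι) :
    ‖det (S.piecewise X Y)‖ ≤
      (Fintype.card ι).choose #S * (α ^ (2 * #S) * β ^ (2 * (Fintype.card ι - #S))) := by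
  set M : Matrix ι ι R := S.piecewise X Y
  have hSc : #Sᶜ = Fintype.card ι - #S := card_compl S
  have hfiber : ∀ σ : Perm ι, σ ∈ univ → S.image σ ∈ powersetCard #S univ := fun σ _ =>
    mem_powersetCard.mpr ⟨subset_univ _, card_image_of_injective _ σ.injective⟩
  rw [det_eq_sum_sign_smul_prod, ← sum_fiberwise_of_maps_to hfiber]
  refine (norm_sum_le _ _).trans <| (sum_le_sum fun T hT => ?_).trans_eq <| by
    rw [sum_const, card_powersetCard, card_univ, nsmul_eq_mul]
  have hT : #T = #S := (mem_powersetCard.mp hT).2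
  have hTc : #Tᶜ = Fintype.card ι - #S := by rw [card_compl, hT]
  have hMX : M.submatrix (S.orderEmbOfFin rfl) (T.orderEmbOfFin hT) =
      X.submatrix (S.orderEmbOfFin rfl) (T.orderEmbOfFin hT) := by
    ext i j
    exact congrFun (piecewise_eq_of_mem _ _ _ (orderEmbOfFin_mem S rfl i)) (T.orderEmbOfFin hT j)
  have hMY : M.submatrix (Sᶜ.orderEmbOfFin hSc) (Tᶜ.orderEmbOfFin hTc) =
      Y.submatrix (Sᶜ.orderEmbOfFin hSc) (Tᶜ.orderEmbOfFin hTc) := by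
    ext i j
    exact congrFun (piecewise_eq_of_notMem _ _ _ (mem_compl.mp (orderEmbOfFin_mem Sᶜ hSc i)))
      (Tᶜ.orderEmbOfFin hTc j)
  rw [sum_perm_image_eq_smul_det_mul_det M rfl hSc hT hTc, norm_units_zsmul, hMX, hMY]
  exact (norm_mul_le _ _).trans (mul_le_mul (hX _ _ _ (orderEmbOfFin _ _).strictMono
    (orderEmbOfFin _ _).strictMono) (hY _ _ _ (orderEmbOfFin _ _).strictMono
    (orderEmbOfFin _ _).strictMono) (norm_nonneg _) ((even_two_mul _).pow_nonneg α))

theorem norm_det_add_le [NormedCommRing R] {X Y : Matrix ι ι R} {α β : ℝ} (hα : 0 ≤ α)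
    (hβ : 0 ≤ β)
    (hX : ∀ s (c d : Fin s → ι), StrictMono c → StrictMono d →
      ‖(X.submatrix c d).det‖ ≤ α ^ (2 * s))
    (hY : ∀ s (c d : Fin s → ι), StrictMono c → StrictMono d →
      ‖(Y.submatrix c d).det‖ ≤ β ^ (2 * s)) :
    ‖(X + Y).det‖ ≤ (α + β) ^ (2 * Fintype.card ι) := by
  set N := Fintype.card ι
  calc ‖(X + Y).det‖ ≤ ∑ S : Finset ι, ‖det (S.piecewise X Y)‖ := by
        rw [det_add_eq_sum_det_piecewise]; exact norm_sum_le _ _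
    _ ≤ ∑ S : Finset ι, N.choose #S * (α ^ (2 * #S) * β ^ (2 * (N - #S))) :=
        sum_le_sum fun S _ => norm_det_piecewise_le hX hY S
    _ = ∑ m ∈ range (N + 1), (α ^ m * β ^ (N - m) * N.choose m) ^ 2 := by
        rw [← powerset_univ, sum_powerset_apply_card
          (f := fun m => (N.choose m : ℝ) * (α ^ (2 * m) * β ^ (2 * (N - m)))), card_univ]
        refine sum_congr rfl fun m _ => ?_
        rw [nsmul_eq_mul]
        ring
    _ ≤ (∑ m ∈ range (N + 1), α ^ m * β ^ (N - m) * N.choose m) ^ 2 :=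
        sum_sq_le_sq_sum_of_nonneg fun m _ => by positivity
    _ = (α + β) ^ (2 * N) := by rw [pow_mul', add_pow]

end Matrix

end

namespace PropPi

variable {n : ℕ} {A B : Matrix (Fin n) (Fin n) ℂ} {α β γ : ℝ}

theorem norm_det_submatrix_le (h : PropPi n A γ) {p : ℕ} (hpn : p ≤ n) {a b : Fin p → Fin n}
    (ha : StrictMono a) (hb : StrictMono b) {v w : Fin p → EuclideanSpace ℂ (Fin n)}
    (hv : ∀ q, ‖v q‖ ≤ 1) (hw : ∀ q, ‖w q‖ ≤ 1) (s : ℕ) (c d : Fin s → Fin p)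
    (hc : StrictMono c) (hd : StrictMono d) :
    ‖((of fun q r => (inner ℂ (v q) (w r) : ℂ) * A (a q) (b r)).submatrix c d).det‖ ≤
      γ ^ (2 * s) := by
  rcases Nat.eq_zero_or_pos s with rfl | hs
  · simp
  · have hsp : s ≤ p := by simpa using Fintype.card_le_of_injective c hc.injective
    exact h s hs (hsp.trans hpn) _ _ (ha.comp hc) (hb.comp hd) _ _ (fun q => hv (c q))
      (fun q => hw (d q))

theorem add (hα : 0 ≤ α) (hβ : 0 ≤ β) (hA : PropPi n A α) (hB : PropPi n B β) :
    PropPi n (A + B) (α + β) := by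
  intro p _ hpn a b ha hb v w hv hw
  have hsplit : (of fun q r => (inner ℂ (v q) (w r) : ℂ) * (A + B) (a q) (b r)) =
      (of fun q r => (inner ℂ (v q) (w r) : ℂ) * A (a q) (b r)) +
        of fun q r => (inner ℂ (v q) (w r) : ℂ) * B (a q) (b r) := by
    ext q r
    simp [mul_add]
  rw [hsplit]
  simpa only [Fintype.card_fin] using norm_det_add_le hα hβ
    (hA.norm_det_submatrix_le hpn ha hb hv hw) (hB.norm_det_submatrix_le hpn ha hb hv hw)

theorem zero : PropPi n 0 0 := by
  intro p hp _ _ _ _ _ _ _ _ _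
  rw [det_eq_zero_of_row_eq_zero ⟨0, hp⟩ fun r => by simp, norm_zero]
  positivity

theorem sum {ι : Type*} (s : Finset ι) {A : ι → Matrix (Fin n) (Fin n) ℂ} {γ : ι → ℝ}
    (hγ : ∀ i ∈ s, 0 ≤ γ i) (hA : ∀ i ∈ s, PropPi n (A i) (γ i)) :
    PropPi n (∑ i ∈ s, A i) (∑ i ∈ s, γ i) := by
  classical
  induction s using Finset.induction_on with
  | empty => simpa using zero
  | insert i s hi ih =>
    rw [sum_insert hi, sum_insert hi]
    simp only [mem_insert, forall_eq_or_imp] at hγ hA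
    exact hA.1.add hγ.1 (sum_nonneg hγ.2) (ih hγ.2 hA.2)

end PropPi

/-- if `Π(A^{(l)}, γ_l)` holds for `l = 1,…,k`, then
`Π(A^{(1)}+⋯+A^{(k)}, γ₁+⋯+γ_k)` holds. -/
theorem stmt8 (n k : ℕ) (A : Fin k → Matrix (Fin n) (Fin n) ℂ) (γ : Fin k → ℝ)
    (hγ : ∀ l, 0 < γ l) (hA : ∀ l, PropPi n (A l) (γ l)) :
    PropPi n (∑ l, A l) (∑ l, γ l) :=
  PropPi.sum univ (fun l _ => (hγ l).le) (fun l _ => hA l)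
end

section
/- Let β > 0, let χ ∈ C_c^∞(ℝ^d) be nonnegative, let a > 0 and set μ^a(dp) = χ(ap) dp. Let E ∈ C^{d+2}(ℝ^d, ℝ) and let h ∈ C_c^∞(ℝ^d, [0,∞)). Suppose there is E_0 > 0 such that |E(p)| ≥ E_0 for all p in the support of h. Then there is a constant K > 0, independent of β, such that the decay constant satisfies α_{C^{(h)}} := ∫_{−β}^{β} ∫_{ℝ^d} |C^{(h)}(τ, x)| dx dτ ≤ K · E_0^{−(d+1)}. -/
open MeasureTheory
open scoped BigOperators

/-- The fermionic covariance in difference variables, with momentum measure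
`μ^a(dp) = χ(ap) dp`:  `C^{(h)}(τ,x) = ∫ h(p) e^{i p·x} 𝐂(τ, E(p)) χ(ap) dp`. -/
noncomputable def fermiCovDiff {d : ℕ} (β : ℝ) (χ : EuclideanSpace ℝ (Fin d) → ℝ)
    (a : ℝ) (E h : EuclideanSpace ℝ (Fin d) → ℝ)
    (τ : ℝ) (x : EuclideanSpace ℝ (Fin d)) : ℂ :=
  ∫ p, (h p : ℂ) * Complex.exp (Complex.I * ((inner ℝ p x : ℝ) : ℂ)) *
      ((fermiC β τ (E p) : ℝ) : ℂ) * ((χ (a • p) : ℝ) : ℂ)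

noncomputable def sig (x : ℝ) : ℝ := (1 + Real.exp x)⁻¹

lemma sig_denom_pos (x : ℝ) : 0 < 1 + Real.exp x := by positivity

lemma sig_pos (x : ℝ) : 0 < sig x := by
  unfold sig; positivity

lemma sig_le_one (x : ℝ) : sig x ≤ 1 := by
  rw [sig, inv_le_one_iff₀]; right; linarith [Real.exp_pos x]

lemma sig_le_exp_neg (x : ℝ) : sig x ≤ Real.exp (-x) := by
  rw [sig, Real.exp_neg]
  exact inv_anti₀ (Real.exp_pos x) (by linarith)

lemma sig_neg_eq (x : ℝ) : sig (-x) = 1 - sig x := by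
  have h1 : 1 + Real.exp x ≠ 0 := (sig_denom_pos x).ne'
  have h2 : 1 + Real.exp (-x) ≠ 0 := (sig_denom_pos (-x)).ne'
  rw [sig, sig]
  rw [Real.exp_neg]
  have he : Real.exp x ≠ 0 := (Real.exp_pos x).ne'
  field_simp
  ring

lemma contDiff_sig : ContDiff ℝ (⊤ : ℕ∞) sig := by
  apply ContDiff.inv
  · exact contDiff_const.add Real.contDiff_exp
  · exact fun x => (sig_denom_pos x).ne'

lemma hasDerivAt_sig (x : ℝ) : HasDerivAt sig (-(sig x * (1 - sig x))) x := by
  have h : HasDerivAt (fun y => 1 + Real.exp y) (Real.exp x) x :=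
    (Real.hasDerivAt_exp x).const_add 1
  have h2 := h.inv (sig_denom_pos x).ne'
  refine HasDerivAt.congr_deriv (f := sig) h2 ?_
  have h1 : 1 + Real.exp x ≠ 0 := (sig_denom_pos x).ne'
  rw [← sig_neg_eq, sig, sig, Real.exp_neg]
  have he : Real.exp x ≠ 0 := (Real.exp_pos x).ne'
  field_simp
  ring

/-- Representation of higher derivatives of `sig`. -/
lemma iteratedDeriv_sig_rep (k : ℕ) : ∃ q : Polynomial ℝ,
    ∀ x, iteratedDeriv (k+1) sig x = sig x * (1 - sig x) * q.eval (sig x) := by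
  induction k with
  | zero =>
    refine ⟨-1, fun x => ?_⟩
    rw [iteratedDeriv_one, (hasDerivAt_sig x).deriv]
    simp
  | succ k ih =>
    obtain ⟨q, hq⟩ := ih
    set F : Polynomial ℝ := Polynomial.X * (1 - Polynomial.X) * q with hF
    refine ⟨-((1 - 2 * Polynomial.X) * q + Polynomial.X * (1 - Polynomial.X) * q.derivative), fun x => ?_⟩
    have hrep : iteratedDeriv (k+1) sig = fun x => F.eval (sig x) := by
      funext y; rw [hq y]; simp [hF]
    rw [iteratedDeriv_succ, hrep]
    have hd : HasDerivAt (fun y => F.eval (sig y))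
        (F.derivative.eval (sig x) * (-(sig x * (1 - sig x)))) x :=
      (F.hasDerivAt (sig x)).comp x (hasDerivAt_sig x)
    rw [hd.deriv]
    have : F.derivative = (1 - 2 * Polynomial.X) * q + Polynomial.X * (1 - Polynomial.X) * q.derivative := by
      rw [hF]
      simp only [Polynomial.derivative_mul, Polynomial.derivative_X, Polynomial.derivative_sub,
        Polynomial.derivative_one]
      ring
    rw [this]
    simp
    ring

lemma sig_mul_le (x : ℝ) : sig x * (1 - sig x) ≤ Real.exp (-|x|) := by
  rcases le_or_gt 0 x with hx | hx
  · rw [abs_of_nonneg hx]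
    calc sig x * (1 - sig x) ≤ Real.exp (-x) * 1 := by
          apply mul_le_mul (sig_le_exp_neg x) (by linarith [sig_pos x]) (by linarith [sig_le_one x]) (Real.exp_pos _).le
      _ = Real.exp (-x) := mul_one _
  · rw [abs_of_neg hx]
    have h1 : 1 - sig x = sig (-x) := (sig_neg_eq x).symm
    rw [h1]
    calc sig x * sig (-x) ≤ 1 * Real.exp (-(-x)) := by
          apply mul_le_mul (sig_le_one x) (sig_le_exp_neg (-x)) (sig_pos (-x)).le zero_le_one
      _ = Real.exp (-(-x)) := one_mul _
    
/-- Uniform bound on derivatives of `sig` up to order `n`. -/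
lemma sig_deriv_bound (n : ℕ) : ∃ M > 0, ∀ k, 1 ≤ k → k ≤ n → ∀ x : ℝ,
    |iteratedDeriv k sig x| ≤ M * Real.exp (-|x|) := by
  -- pick polynomial bound for each k
  have key : ∀ k : ℕ, ∃ M > 0, ∀ x : ℝ, |iteratedDeriv (k+1) sig x| ≤ M * Real.exp (-|x|) := by
    intro k
    obtain ⟨q, hq⟩ := iteratedDeriv_sig_rep k
    obtain ⟨C, hC⟩ := (isCompact_Icc (a := (0:ℝ)) (b := 1)).exists_bound_of_continuousOn
      (q.continuous.continuousOn)
    refine ⟨max C 1, lt_of_lt_of_le one_pos (le_max_right _ _), fun x => ?_⟩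
    rw [hq x, abs_mul]
    have h1 : |sig x * (1 - sig x)| ≤ Real.exp (-|x|) := by
      rw [abs_of_nonneg (by nlinarith [sig_pos x, sig_le_one x])]
      exact sig_mul_le x
    have h2 : |q.eval (sig x)| ≤ max C 1 := by
      refine le_trans ?_ (le_max_left C 1)
      have := hC (sig x) ⟨(sig_pos x).le, sig_le_one x⟩
      rwa [Real.norm_eq_abs] at this
    calc |sig x * (1 - sig x)| * |q.eval (sig x)| ≤ Real.exp (-|x|) * max C 1 := by
          apply mul_le_mul h1 h2 (abs_nonneg _) (Real.exp_pos _).le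
      _ = max C 1 * Real.exp (-|x|) := mul_comm _ _
  choose M hMpos hM using key
  have hsum : 0 ≤ ∑ i ∈ Finset.range n, M i := Finset.sum_nonneg (fun i _ => (hMpos i).le)
  refine ⟨(∑ i ∈ Finset.range n, M i) + 1, by linarith, fun k hk1 hkn x => ?_⟩
  obtain ⟨k', rfl⟩ := Nat.exists_eq_add_of_le hk1
  have hk'n : k' < n := by omega
  calc |iteratedDeriv (1 + k') sig x| = |iteratedDeriv (k' + 1) sig x| := by rw [add_comm]
    _ ≤ M k' * Real.exp (-|x|) := hM k' x
    _ ≤ ((∑ i ∈ Finset.range n, M i) + 1) * Real.exp (-|x|) := by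
        apply mul_le_mul_of_nonneg_right _ (Real.exp_pos _).le
        have : M k' ≤ ∑ i ∈ Finset.range n, M i :=
          Finset.single_le_sum (fun i _ => (hMpos i).le) (Finset.mem_range.mpr hk'n)
        linarith
lemma pow_le_factorial_mul_exp {x : ℝ} (hx : 0 ≤ x) (k : ℕ) :
    x ^ k ≤ (k.factorial : ℝ) * Real.exp x := by
  have hfac : (0:ℝ) < (k.factorial : ℝ) := by positivity
  rw [← div_le_iff₀' hfac]
  calc x ^ k / (k.factorial : ℝ)
      ≤ ∑ i ∈ Finset.range (k+1), x ^ i / (i.factorial : ℝ) :=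
        Finset.single_le_sum (f := fun i => x ^ i / (i.factorial : ℝ))
          (fun i _ => by positivity) (Finset.self_mem_range_succ k)
    _ ≤ Real.exp x := Real.sum_le_exp_of_nonneg hx (k+1)

lemma pow_mul_exp_le {c x : ℝ} (hc : 0 < c) (hx : 0 ≤ x) (j : ℕ) :
    x ^ j * Real.exp (-c * x) ≤ (j.factorial : ℝ) * (2/c) ^ j * Real.exp (-(c/2) * x) := by
  have h1 : (x * (c/2)) ^ j ≤ (j.factorial : ℝ) * Real.exp (x * (c/2)) :=
    pow_le_factorial_mul_exp (by positivity) j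
  have hkey : x ^ j ≤ (j.factorial : ℝ) * (2/c) ^ j * Real.exp (x * (c/2)) := by
    have h2 : x ^ j = (2/c) ^ j * (x * (c/2)) ^ j := by
      rw [← mul_pow]
      congr 1
      field_simp
    rw [h2]
    calc (2/c) ^ j * (x * (c/2)) ^ j ≤ (2/c) ^ j * ((j.factorial : ℝ) * Real.exp (x * (c/2))) := by
          apply mul_le_mul_of_nonneg_left h1 (by positivity)
      _ = (j.factorial : ℝ) * (2/c) ^ j * Real.exp (x * (c/2)) := by ring
  calc x ^ j * Real.exp (-c * x)
      ≤ ((j.factorial : ℝ) * (2/c) ^ j * Real.exp (x * (c/2))) * Real.exp (-c * x) := by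
        apply mul_le_mul_of_nonneg_right hkey (Real.exp_pos _).le
    _ = (j.factorial : ℝ) * (2/c) ^ j * Real.exp (-(c/2) * x) := by
        rw [mul_assoc, ← Real.exp_add]
        have : x * (c/2) + -c * x = -(c/2) * x := by ring
        rw [this]

/-- Core scalar estimate: derivatives of `v ↦ exp(-t v) * sig(-b v)` for `v ≥ E₀`. -/
lemma core_scalar (n : ℕ) {E₀ : ℝ} (hE₀ : 0 < E₀) :
    ∃ A > 0, ∀ b t : ℝ, 0 < b → 0 ≤ t → t ≤ b → ∀ j, j ≤ n → ∀ u : ℝ, E₀ ≤ u →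
    |iteratedDeriv j (fun v => Real.exp (-t * v) * sig (-b * v)) u|
      ≤ A * (Real.exp (-(E₀/2) * t) + Real.exp (-(E₀/2) * b)) := by
  obtain ⟨M, hM0, hM⟩ := sig_deriv_bound n
  set B : ℝ := (n.factorial : ℝ) * (1 + 2/E₀) ^ n * (1 + M) with hB
  have hBpos : 0 < B := by positivity
  refine ⟨2 ^ n * B, by positivity, fun b t hb ht htb j hj u hu => ?_⟩
  have hu0 : 0 < u := lt_of_lt_of_le hE₀ hu
  set e1 := Real.exp (-(E₀/2) * t) with he1
  set e2 := Real.exp (-(E₀/2) * b) with he2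
  have he1p : 0 < e1 := Real.exp_pos _
  have he2p : 0 < e2 := Real.exp_pos _
  set f : ℝ → ℝ := fun v => Real.exp (-t * v) with hf
  set g : ℝ → ℝ := fun v => sig (-b * v) with hg
  have hfs : ContDiff ℝ (⊤ : ℕ∞) f := Real.contDiff_exp.comp (contDiff_const.mul contDiff_id)
  have hgs : ContDiff ℝ (⊤ : ℕ∞) g := contDiff_sig.comp (contDiff_const.mul contDiff_id)
  -- iterated derivative formulas
  have hfi : ∀ i : ℕ, ∀ v : ℝ, |iteratedDeriv i f v| = t ^ i * Real.exp (-t * v) := by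
    intro i v
    have := iteratedDeriv_exp_const_mul i (-t)
    rw [hf, this]
    rw [abs_mul, abs_pow, abs_neg, abs_of_nonneg ht, abs_of_nonneg (Real.exp_pos _).le]
  have hgi : ∀ i : ℕ, ∀ v : ℝ, |iteratedDeriv i g v| = b ^ i * |iteratedDeriv i sig (-b * v)| := by
    intro i v
    rw [hg, iteratedDeriv_comp_const_mul (contDiff_sig.of_le (by exact_mod_cast le_top)) (-b)]
    rw [abs_mul, abs_pow, abs_neg, abs_of_nonneg hb.le]
  have hfac2 : ∀ j' : ℕ, j' ≤ n → (j'.factorial : ℝ) * (2/E₀) ^ j' ≤ (n.factorial : ℝ) * (1 + 2/E₀) ^ n := by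
    intro j' hj'
    have hf1 : (j'.factorial : ℝ) ≤ (n.factorial : ℝ) := by
      exact_mod_cast Nat.factorial_le hj'
    have hf2 : ((2:ℝ)/E₀) ^ j' ≤ (1 + 2/E₀) ^ n := by
      calc ((2:ℝ)/E₀) ^ j' ≤ (1 + 2/E₀) ^ j' :=
            pow_le_pow_left₀ (by positivity) (by linarith) j'
        _ ≤ (1 + 2/E₀) ^ n := by
            apply pow_le_pow_right₀ _ hj'
            have : (0:ℝ) < 2/E₀ := by positivity
            linarith
    apply mul_le_mul hf1 hf2 (by positivity) (by positivity)
  -- term bound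
  have hterm : ∀ i, i ≤ j → |iteratedDeriv i f u| * |iteratedDeriv (j - i) g u| ≤ B * (e1 + e2) := by
    intro i hi
    rcases Nat.eq_or_lt_of_le hi with hij | hij
    · -- i = j : sig factor of order 0
      subst hij
      rw [Nat.sub_self, hfi, hgi, pow_zero, one_mul, iteratedDeriv_zero]
      have h1 : |sig (-b * u)| ≤ 1 := by
        rw [abs_of_nonneg (sig_pos _).le]; exact sig_le_one _
      have h2 : Real.exp (-t * u) ≤ Real.exp (-E₀ * t) := by
        apply Real.exp_le_exp.mpr; nlinarith
      calc t ^ i * Real.exp (-t * u) * |sig (-b * u)|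
          ≤ t ^ i * Real.exp (-t * u) * 1 := by
            apply mul_le_mul_of_nonneg_left h1 (by positivity)
        _ = t ^ i * Real.exp (-t * u) := mul_one _
        _ ≤ t ^ i * Real.exp (-E₀ * t) := by
            apply mul_le_mul_of_nonneg_left h2 (by positivity)
        _ ≤ (i.factorial : ℝ) * (2/E₀) ^ i * e1 := pow_mul_exp_le hE₀ ht i
        _ ≤ ((n.factorial : ℝ) * (1 + 2/E₀) ^ n) * e1 := by
            apply mul_le_mul_of_nonneg_right (hfac2 i hj) he1p.le
        _ ≤ B * e1 := by
            apply mul_le_mul_of_nonneg_right _ he1p.le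
            rw [hB]
            nlinarith [mul_pos (show (0:ℝ) < (n.factorial:ℝ) * (1 + 2/E₀)^n by positivity) hM0]
        _ ≤ B * (e1 + e2) := by nlinarith
    · -- i < j, so l := j - i ≥ 1
      have hl1 : 1 ≤ j - i := by omega
      have hln : j - i ≤ n := by omega
      rw [hfi, hgi]
      have hsig : |iteratedDeriv (j-i) sig (-b * u)| ≤ M * Real.exp (-(b * u)) := by
        have h := hM (j-i) hl1 hln (-b * u)
        have habs : |(-b * u)| = b * u := by
          rw [abs_mul, abs_neg, abs_of_nonneg hb.le, abs_of_nonneg hu0.le]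
        rwa [habs] at h
      have hexp1 : Real.exp (-t * u) ≤ 1 := by
        apply Real.exp_le_one_iff.mpr; nlinarith
      have hexp2 : Real.exp (-(b * u)) ≤ Real.exp (-E₀ * b) := by
        apply Real.exp_le_exp.mpr; nlinarith
      have hti : t ^ i ≤ b ^ i := pow_le_pow_left₀ ht htb i
      calc t ^ i * Real.exp (-t * u) * (b ^ (j-i) * |iteratedDeriv (j-i) sig (-b * u)|)
          ≤ b ^ i * 1 * (b ^ (j-i) * (M * Real.exp (-E₀ * b))) := by
            apply mul_le_mul
            · exact mul_le_mul hti hexp1 (Real.exp_pos _).le (by positivity)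
            · apply mul_le_mul_of_nonneg_left _ (by positivity)
              exact le_trans hsig (mul_le_mul_of_nonneg_left hexp2 hM0.le)
            · positivity
            · positivity
        _ = M * (b ^ j * Real.exp (-E₀ * b)) := by
            rw [mul_one, ← mul_assoc, ← pow_add, Nat.add_sub_cancel' hi]
            ring
        _ ≤ M * ((j.factorial : ℝ) * (2/E₀) ^ j * e2) := by
            exact mul_le_mul_of_nonneg_left (pow_mul_exp_le hE₀ hb.le j) hM0.le
        _ ≤ M * (((n.factorial : ℝ) * (1 + 2/E₀) ^ n) * e2) := by
            apply mul_le_mul_of_nonneg_left _ hM0.le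
            exact mul_le_mul_of_nonneg_right (hfac2 j hj) he2p.le
        _ ≤ B * e2 := by
            rw [hB]
            have hq : (0:ℝ) < (n.factorial : ℝ) * (1 + 2/E₀) ^ n := by positivity
            nlinarith [he2p.le, mul_pos hq he2p]
        _ ≤ B * (e1 + e2) := by nlinarith
  -- assemble by the product rule
  have habs : |iteratedDeriv j (fun v => Real.exp (-t * v) * sig (-b * v)) u|
      = ‖iteratedFDeriv ℝ j (fun v => f v * g v) u‖ := by
    rw [norm_iteratedFDeriv_eq_norm_iteratedDeriv, Real.norm_eq_abs]
  rw [habs]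
  have hsum : ((2:ℝ) ^ j) = ∑ i ∈ Finset.range (j+1), (j.choose i : ℝ) := by
    rw [← Nat.cast_sum, Nat.sum_range_choose]
    push_cast
    ring
  calc ‖iteratedFDeriv ℝ j (fun v => f v * g v) u‖
      ≤ ∑ i ∈ Finset.range (j+1), (j.choose i : ℝ) * ‖iteratedFDeriv ℝ i f u‖
          * ‖iteratedFDeriv ℝ (j-i) g u‖ :=
        norm_iteratedFDeriv_mul_le hfs hgs u (by exact_mod_cast le_top)
    _ ≤ ∑ i ∈ Finset.range (j+1), (j.choose i : ℝ) * (B * (e1 + e2)) := by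
        apply Finset.sum_le_sum
        intro i hi
        rw [mul_assoc]
        apply mul_le_mul_of_nonneg_left _ (by positivity)
        have h1 : ‖iteratedFDeriv ℝ i f u‖ = |iteratedDeriv i f u| := by
          rw [norm_iteratedFDeriv_eq_norm_iteratedDeriv, Real.norm_eq_abs]
        have h2 : ‖iteratedFDeriv ℝ (j-i) g u‖ = |iteratedDeriv (j-i) g u| := by
          rw [norm_iteratedFDeriv_eq_norm_iteratedDeriv, Real.norm_eq_abs]
        rw [h1, h2]
        exact hterm i (Nat.lt_succ_iff.mp (Finset.mem_range.mp hi))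
    _ = (2 ^ j : ℝ) * (B * (e1 + e2)) := by
        rw [hsum, Finset.sum_mul]
    _ ≤ 2 ^ n * B * (e1 + e2) := by
        rw [← mul_assoc]
        apply mul_le_mul_of_nonneg_right _ (by positivity)
        apply mul_le_mul_of_nonneg_right _ hBpos.le
        apply pow_le_pow_right₀ one_le_two hj
lemma fermiF_eq_sig (β X : ℝ) : fermiF β X = sig (β * X) := rfl

lemma exp_neg_mul_sig_neg (y : ℝ) : Real.exp (-y) * sig (-y) = sig y := by
  rw [sig, sig, Real.exp_neg]
  have h1 : Real.exp y ≠ 0 := (Real.exp_pos y).ne'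
  have h2 : 1 + Real.exp y ≠ 0 := (sig_denom_pos y).ne'
  have h3 : 1 + (Real.exp y)⁻¹ ≠ 0 := by
    have := Real.exp_pos y
    positivity
  field_simp
  ring

/-- The swap identity: `e^{-tX} sig(-βX) = e^{(β-t)X} sig(βX)`. -/
lemma swap_identity (b t X : ℝ) :
    Real.exp (-t * X) * sig (-b * X) = Real.exp (-(b - t) * (-X)) * sig (-b * (-X)) := by
  have key : Real.exp (-(b * X)) * sig (-(b * X)) = sig (b * X) := exp_neg_mul_sig_neg (b * X)
  have h2 : -b * (-X) = b * X := by ring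
  rw [h2, ← key, ← mul_assoc, ← Real.exp_add]
  have h1 : -b * X = -(b * X) := by ring
  rw [h1]
  congr 1
  ring

lemma swap_identity' (b t X : ℝ) :
    Real.exp (-t * X) * sig (b * X) = Real.exp (-(b + t) * X) * sig (-b * X) := by
  have key := exp_neg_mul_sig_neg (b * X)
  calc Real.exp (-t * X) * sig (b * X)
      = Real.exp (-t * X) * (Real.exp (-(b * X)) * sig (-(b * X))) := by rw [key]
    _ = Real.exp (-t * X + -(b * X)) * sig (-(b * X)) := by rw [Real.exp_add]; ring
    _ = Real.exp (-(b + t) * X) * sig (-b * X) := by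
        have h1 : -t * X + -(b * X) = -(b + t) * X := by ring
        have h2 : -(b * X) = -b * X := by ring
        rw [h1, h2]

lemma abs_iteratedDeriv_comp_neg (j : ℕ) (f : ℝ → ℝ) (u : ℝ) :
    |iteratedDeriv j (fun x => f (-x)) u| = |iteratedDeriv j f (-u)| := by
  rw [iteratedDeriv_comp_neg, smul_eq_mul, abs_mul, abs_pow, abs_neg, abs_one,
    one_pow, one_mul]

lemma fermiC_branch (β τ : ℝ) (hβ : 0 < β) (hτ : τ ∈ Set.Ioc (-β) β) :
    fermiC β τ = fun X => if 0 < τ then -(Real.exp (-τ * X) * sig (-β * X))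
      else Real.exp (-τ * X) * sig (β * X) := by
  have hceil : ⌈(τ - β) / (2 * β)⌉ = (0 : ℤ) := by
    rw [Int.ceil_eq_zero_iff]
    constructor
    · rw [lt_div_iff₀ (by linarith)]
      linarith [hτ.1]
    · apply div_nonpos_of_nonpos_of_nonneg <;> linarith [hτ.2]
  funext X
  rw [fermiC]
  simp only [hceil, Int.cast_zero, mul_zero, sub_zero]
  rcases lt_or_ge 0 τ with hp | hn
  · rw [if_pos hp, if_pos hp]
    rw [fermiF_eq_sig, ← sig_neg_eq]
    have : -(β * X) = -β * X := by ring
    rw [this]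
    ring
  · rw [if_neg (not_lt.mpr hn), if_neg (not_lt.mpr hn), fermiF_eq_sig]

lemma contDiff_fermiC (β τ : ℝ) (hβ : 0 < β) (hτ : τ ∈ Set.Ioc (-β) β) :
    ContDiff ℝ (⊤ : ℕ∞) (fermiC β τ) := by
  rw [fermiC_branch β τ hβ hτ]
  have hexp : ContDiff ℝ (⊤ : ℕ∞) (fun X : ℝ => Real.exp (-τ * X)) :=
    Real.contDiff_exp.comp (contDiff_const.mul contDiff_id)
  have hs1 : ContDiff ℝ (⊤ : ℕ∞) (fun X : ℝ => sig (-β * X)) :=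
    contDiff_sig.comp (contDiff_const.mul contDiff_id)
  have hs2 : ContDiff ℝ (⊤ : ℕ∞) (fun X : ℝ => sig (β * X)) :=
    contDiff_sig.comp (contDiff_const.mul contDiff_id)
  rcases lt_or_ge 0 τ with hp | hn
  · simp only [if_pos hp]
    exact (hexp.mul hs1).neg
  · simp only [if_neg (not_lt.mpr hn)]
    exact hexp.mul hs2

/-- Main bound on derivatives of `fermiC β τ` at insulating energies. -/
lemma fermiC_deriv_bound (n : ℕ) {E₀ : ℝ} (hE₀ : 0 < E₀) :
    ∃ A > 0, ∀ β τ : ℝ, 0 < β → τ ∈ Set.Ioc (-β) β → ∀ j, j ≤ n → ∀ u : ℝ, E₀ ≤ |u| →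
    |iteratedDeriv j (fermiC β τ) u|
      ≤ A * (Real.exp (-(E₀/2) * |τ|) + Real.exp (-(E₀/2) * (β - |τ|))
          + Real.exp (-(E₀/2) * β)) := by
  obtain ⟨A, hA, hcore⟩ := core_scalar n hE₀
  refine ⟨A, hA, fun β τ hβ hτ j hj u hu => ?_⟩
  have hτ1 := hτ.1
  have hτ2 := hτ.2
  rw [fermiC_branch β τ hβ hτ]
  rcases lt_or_ge 0 τ with hp | hn
  · -- positive time branch
    have hbr : (fun X => if 0 < τ then -(Real.exp (-τ * X) * sig (-β * X))
        else Real.exp (-τ * X) * sig (β * X))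
        = fun X => -(Real.exp (-τ * X) * sig (-β * X)) := by
      funext X; rw [if_pos hp]
    rw [hbr, abs_of_pos hp]
    rcases le_or_gt 0 u with hu0 | hu0
    · -- u ≥ E₀
      have huE : E₀ ≤ u := by rwa [abs_of_nonneg hu0] at hu
      have hb := hcore β τ hβ hp.le hτ2 j hj u huE
      calc |iteratedDeriv j (fun X => -(Real.exp (-τ * X) * sig (-β * X))) u|
          = |iteratedDeriv j (fun X => Real.exp (-τ * X) * sig (-β * X)) u| := by
            rw [iteratedDeriv_fun_neg, abs_neg]
        _ ≤ A * (Real.exp (-(E₀/2) * τ) + Real.exp (-(E₀/2) * β)) := hb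
        _ ≤ A * (Real.exp (-(E₀/2) * τ) + Real.exp (-(E₀/2) * (β - τ))
              + Real.exp (-(E₀/2) * β)) := by
            nlinarith [mul_pos hA (Real.exp_pos (-(E₀/2) * (β - τ)))]
    · -- u ≤ -E₀  : use swapped representation
      have huE : E₀ ≤ -u := by rwa [abs_of_neg hu0] at hu
      have hswap : (fun X => -(Real.exp (-τ * X) * sig (-β * X)))
          = fun X => -((fun v => Real.exp (-(β - τ) * v) * sig (-β * v)) (-X)) := by
        funext X
        exact congrArg Neg.neg (swap_identity β τ X)
      rw [hswap]
      have hb := hcore β (β - τ) hβ (by linarith) (by linarith) j hj (-u) huE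
      calc |iteratedDeriv j (fun X => -((fun v => Real.exp (-(β - τ) * v) * sig (-β * v)) (-X))) u|
          = |iteratedDeriv j (fun X => (fun v => Real.exp (-(β - τ) * v) * sig (-β * v)) (-X)) u| := by
            rw [iteratedDeriv_fun_neg, abs_neg]
        _ = |iteratedDeriv j (fun v => Real.exp (-(β - τ) * v) * sig (-β * v)) (-u)| :=
            abs_iteratedDeriv_comp_neg j (fun v => Real.exp (-(β - τ) * v) * sig (-β * v)) u
        _ ≤ A * (Real.exp (-(E₀/2) * (β - τ)) + Real.exp (-(E₀/2) * β)) := hb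
        _ ≤ A * (Real.exp (-(E₀/2) * τ) + Real.exp (-(E₀/2) * (β - τ))
              + Real.exp (-(E₀/2) * β)) := by
            nlinarith [mul_pos hA (Real.exp_pos (-(E₀/2) * τ))]
  · -- nonpositive time branch
    have hbr : (fun X => if 0 < τ then -(Real.exp (-τ * X) * sig (-β * X))
        else Real.exp (-τ * X) * sig (β * X))
        = fun X => Real.exp (-τ * X) * sig (β * X) := by
      funext X; rw [if_neg (not_lt.mpr hn)]
    rw [hbr, abs_of_nonpos hn]
    rcases le_or_gt 0 u with hu0 | hu0
    · -- u ≥ E₀ : swapped representation with t = β + τ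
      have huE : E₀ ≤ u := by rwa [abs_of_nonneg hu0] at hu
      have hswap : (fun X => Real.exp (-τ * X) * sig (β * X))
          = fun X => Real.exp (-(β + τ) * X) * sig (-β * X) := by
        funext X
        exact swap_identity' β τ X
      rw [hswap]
      have hb := hcore β (β + τ) hβ (by linarith) (by linarith) j hj u huE
      calc |iteratedDeriv j (fun X => Real.exp (-(β + τ) * X) * sig (-β * X)) u|
          ≤ A * (Real.exp (-(E₀/2) * (β + τ)) + Real.exp (-(E₀/2) * β)) := hb
        _ ≤ A * (Real.exp (-(E₀/2) * -τ) + Real.exp (-(E₀/2) * (β - -τ))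
              + Real.exp (-(E₀/2) * β)) := by
            have heq : β - -τ = β + τ := by ring
            rw [heq]
            nlinarith [mul_pos hA (Real.exp_pos (-(E₀/2) * -τ))]
    · -- u ≤ -E₀ : composition with negation, t = -τ
      have huE : E₀ ≤ -u := by rwa [abs_of_neg hu0] at hu
      have hswap : (fun X => Real.exp (-τ * X) * sig (β * X))
          = fun X => (fun v => Real.exp (-(-τ) * v) * sig (-β * v)) (-X) := by
        funext X
        show Real.exp (-τ * X) * sig (β * X) = Real.exp (-(-τ) * -X) * sig (-β * -X)
        have h1 : -(-τ) * -X = -τ * X := by ring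
        have h2 : -β * -X = β * X := by ring
        rw [h1, h2]
      rw [hswap]
      have hb := hcore β (-τ) hβ (by linarith) (by linarith) j hj (-u) huE
      calc |iteratedDeriv j (fun X => (fun v => Real.exp (-(-τ) * v) * sig (-β * v)) (-X)) u|
          = |iteratedDeriv j (fun v => Real.exp (-(-τ) * v) * sig (-β * v)) (-u)| :=
            abs_iteratedDeriv_comp_neg j (fun v => Real.exp (-(-τ) * v) * sig (-β * v)) u
        _ ≤ A * (Real.exp (-(E₀/2) * -τ) + Real.exp (-(E₀/2) * β)) := hb
        _ ≤ A * (Real.exp (-(E₀/2) * -τ) + Real.exp (-(E₀/2) * (β - -τ))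
              + Real.exp (-(E₀/2) * β)) := by
            nlinarith [mul_pos hA (Real.exp_pos (-(E₀/2) * (β - -τ)))]
lemma integral_exp_mul_ab {c : ℝ} (hc : c ≠ 0) (a b : ℝ) :
    ∫ x in a..b, Real.exp (c * x) = (Real.exp (c * b) - Real.exp (c * a)) / c := by
  have h := intervalIntegral.mul_integral_comp_mul_left (f := Real.exp) (a := a) (b := b) (c := c)
  rw [integral_exp] at h
  rw [eq_div_iff hc]
  linarith [h]

/-- `τ`-integral of the weight function is bounded by `6/c`, uniformly in `β`. -/
lemma W_integral_bound {c : ℝ} (hc : 0 < c) {β : ℝ} (hβ : 0 < β) :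
    (∫ τ in Set.Ioc (-β) β,
      (Real.exp (-c * |τ|) + Real.exp (-c * (β - |τ|)) + Real.exp (-c * β))) ≤ 6 / c := by
  set W : ℝ → ℝ := fun τ => Real.exp (-c * |τ|) + Real.exp (-c * (β - |τ|)) + Real.exp (-c * β)
    with hWdef
  have habs : Continuous (fun τ : ℝ => |τ|) := continuous_abs
  have hWc : Continuous W := by
    apply Continuous.add
    apply Continuous.add
    · exact Real.continuous_exp.comp (continuous_const.mul habs)
    · exact Real.continuous_exp.comp (continuous_const.mul (continuous_const.sub habs))
    · exact continuous_const
  have hle : -β ≤ β := by linarith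
  -- useful bounds
  have hE0 : (0:ℝ) < Real.exp (-(c * β)) := Real.exp_pos _
  have hE1 : Real.exp (-(c * β)) ≤ 1 := Real.exp_le_one_iff.mpr (by nlinarith)
  have hE2 : β * Real.exp (-(c * β)) ≤ 1 / c := by
    rw [Real.exp_neg, le_div_iff₀ hc]
    have hcb : c * β + 1 ≤ Real.exp (c * β) := Real.add_one_le_exp _
    have hep : 0 < Real.exp (c * β) := Real.exp_pos _
    have heq : β * (Real.exp (c * β))⁻¹ * c = (c * β) / Real.exp (c * β) := by
      field_simp
    rw [heq, div_le_one hep]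
    linarith
  -- rewrite as interval integral and split at 0
  rw [← intervalIntegral.integral_of_le hle]
  rw [← intervalIntegral.integral_add_adjacent_intervals (a := -β) (b := 0) (c := β)
    (hWc.intervalIntegrable _ _) (hWc.intervalIntegrable _ _)]
  -- Right piece
  have hR : ∫ τ in (0:ℝ)..β, W τ ≤ 3 / c := by
    have hcong : ∫ τ in (0:ℝ)..β, W τ
        = ∫ τ in (0:ℝ)..β, (Real.exp (-c * τ) + Real.exp (c * τ) * Real.exp (-(c * β))
            + Real.exp (-(c * β))) := by
      apply intervalIntegral.integral_congr
      intro τ hτ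
      rw [Set.uIcc_of_le (by linarith : (0:ℝ) ≤ β)] at hτ
      have h1 : |τ| = τ := abs_of_nonneg hτ.1
      rw [hWdef]
      simp only [h1]
      rw [show -c * (β - τ) = c * τ + -(c * β) by ring, Real.exp_add,
        show -c * β = -(c * β) by ring]
    rw [hcong]
    have i1 : IntervalIntegrable (fun τ : ℝ => Real.exp (-c * τ)) volume 0 β :=
      (Real.continuous_exp.comp (continuous_const.mul continuous_id)).intervalIntegrable _ _
    have i2 : IntervalIntegrable (fun τ : ℝ => Real.exp (c * τ) * Real.exp (-(c * β))) volume 0 β :=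
      ((Real.continuous_exp.comp (continuous_const.mul continuous_id)).mul
        continuous_const).intervalIntegrable _ _
    have i3 : IntervalIntegrable (fun _ : ℝ => Real.exp (-(c * β))) volume 0 β :=
      continuous_const.intervalIntegrable _ _
    rw [intervalIntegral.integral_add (i1.add i2) i3, intervalIntegral.integral_add i1 i2]
    have v1 : ∫ τ in (0:ℝ)..β, Real.exp (-c * τ) = (1 - Real.exp (-(c*β))) / c := by
      rw [integral_exp_mul_ab (neg_ne_zero.mpr hc.ne') 0 β]
      rw [mul_zero, Real.exp_zero, show -c * β = -(c*β) by ring, div_neg, ← neg_div, neg_sub]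
    have v2 : ∫ τ in (0:ℝ)..β, Real.exp (c * τ) * Real.exp (-(c * β))
        = ((Real.exp (c*β) - 1) / c) * Real.exp (-(c * β)) := by
      rw [intervalIntegral.integral_mul_const, integral_exp_mul_ab hc.ne' 0 β,
        mul_zero, Real.exp_zero]
    have v3 : ∫ _ in (0:ℝ)..β, Real.exp (-(c * β)) = β * Real.exp (-(c * β)) := by
      rw [intervalIntegral.integral_const, smul_eq_mul, sub_zero]
    rw [v1, v2, v3]
    have b1 : (1 - Real.exp (-(c*β))) / c ≤ 1 / c := by
      rw [div_le_div_iff₀ hc hc]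
      nlinarith
    have b2 : ((Real.exp (c*β) - 1) / c) * Real.exp (-(c * β)) ≤ 1 / c := by
      have hep : (0:ℝ) < Real.exp (c*β) := Real.exp_pos _
      have hinv : (0:ℝ) < (Real.exp (c*β))⁻¹ := by positivity
      have hmc : Real.exp (c*β) * (Real.exp (c*β))⁻¹ = 1 := mul_inv_cancel₀ hep.ne'
      rw [Real.exp_neg, div_mul_eq_mul_div, div_le_div_iff₀ hc hc]
      nlinarith
    have h3c : (3:ℝ)/c = 1/c + 1/c + 1/c := by ring
    linarith [hE2, b1, b2]
  -- Left piece
  have hL : ∫ τ in (-β)..(0:ℝ), W τ ≤ 3 / c := by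
    have hcong : ∫ τ in (-β)..(0:ℝ), W τ
        = ∫ τ in (-β)..(0:ℝ), (Real.exp (c * τ) + Real.exp (-c * τ) * Real.exp (-(c * β))
            + Real.exp (-(c * β))) := by
      apply intervalIntegral.integral_congr
      intro τ hτ
      rw [Set.uIcc_of_le (by linarith : -β ≤ (0:ℝ))] at hτ
      have h1 : |τ| = -τ := abs_of_nonpos hτ.2
      rw [hWdef]
      simp only [h1]
      rw [show -c * -τ = c * τ by ring, show -c * (β - -τ) = -c * τ + -(c * β) by ring,
        Real.exp_add, show -c * β = -(c * β) by ring]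
    rw [hcong]
    have i1 : IntervalIntegrable (fun τ : ℝ => Real.exp (c * τ)) volume (-β) 0 :=
      (Real.continuous_exp.comp (continuous_const.mul continuous_id)).intervalIntegrable _ _
    have i2 : IntervalIntegrable (fun τ : ℝ => Real.exp (-c * τ) * Real.exp (-(c * β))) volume (-β) 0 :=
      ((Real.continuous_exp.comp (continuous_const.mul continuous_id)).mul
        continuous_const).intervalIntegrable _ _
    have i3 : IntervalIntegrable (fun _ : ℝ => Real.exp (-(c * β))) volume (-β) 0 :=
      continuous_const.intervalIntegrable _ _
    rw [intervalIntegral.integral_add (i1.add i2) i3, intervalIntegral.integral_add i1 i2]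
    have v1 : ∫ τ in (-β)..(0:ℝ), Real.exp (c * τ) = (1 - Real.exp (-(c*β))) / c := by
      rw [integral_exp_mul_ab hc.ne' (-β) 0, mul_zero, Real.exp_zero,
        show c * -β = -(c*β) by ring]
    have v2 : ∫ τ in (-β)..(0:ℝ), Real.exp (-c * τ) * Real.exp (-(c * β))
        = ((Real.exp (c*β) - 1) / c) * Real.exp (-(c * β)) := by
      rw [intervalIntegral.integral_mul_const, integral_exp_mul_ab (neg_ne_zero.mpr hc.ne') (-β) 0,
        mul_zero, Real.exp_zero, show -c * -β = c*β by ring, div_neg, ← neg_div, neg_sub]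
    have v3 : ∫ _ in (-β)..(0:ℝ), Real.exp (-(c * β)) = β * Real.exp (-(c * β)) := by
      rw [intervalIntegral.integral_const, smul_eq_mul, sub_neg_eq_add, zero_add]
    rw [v1, v2, v3]
    have b1 : (1 - Real.exp (-(c*β))) / c ≤ 1 / c := by
      rw [div_le_div_iff₀ hc hc]
      nlinarith
    have b2 : ((Real.exp (c*β) - 1) / c) * Real.exp (-(c * β)) ≤ 1 / c := by
      have hep : (0:ℝ) < Real.exp (c*β) := Real.exp_pos _
      have hinv : (0:ℝ) < (Real.exp (c*β))⁻¹ := by positivity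
      have hmc : Real.exp (c*β) * (Real.exp (c*β))⁻¹ = 1 := mul_inv_cancel₀ hep.ne'
      rw [Real.exp_neg, div_mul_eq_mul_div, div_le_div_iff₀ hc hc]
      nlinarith
    have h3c : (3:ℝ)/c = 1/c + 1/c + 1/c := by ring
    linarith [hE2, b1, b2]
  have : (6:ℝ)/c = 3/c + 3/c := by ring
  rw [this]
  exact add_le_add hL hR
open FourierTransform in
/-- `L¹` bound for the Fourier transform of a `C^n` compactly supported function,
`n > d`, on `EuclideanSpace ℝ (Fin d)`. -/
lemma l1_fourier_bound {d n : ℕ} (hdn : d < n) (Φ : EuclideanSpace ℝ (Fin d) → ℂ)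
    (hΦ : ContDiff ℝ n Φ) (hΦc : HasCompactSupport Φ) :
    ∫ w : EuclideanSpace ℝ (Fin d), ‖𝓕 Φ w‖ ≤
      ((1 + 2^n) * 2^n * ∫ w : EuclideanSpace ℝ (Fin d), (1 + ‖w‖) ^ (-(n:ℝ))) *
        ∑ j ∈ Finset.range (n+1), ∫ v, ‖iteratedFDeriv ℝ j Φ v‖ := by
  have hΦcont : Continuous Φ := hΦ.continuous
  -- integrability of the iterated derivatives
  have hint : ∀ j : ℕ, j ≤ n → Integrable (fun v => ‖iteratedFDeriv ℝ j Φ v‖) := by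
    intro j hj
    have hc : Continuous (fun v => ‖iteratedFDeriv ℝ j Φ v‖) :=
      (hΦ.continuous_iteratedFDeriv (by exact_mod_cast hj)).norm
    have hcs : HasCompactSupport (fun v => ‖iteratedFDeriv ℝ j Φ v‖) :=
      (hΦc.iteratedFDeriv j).comp_left norm_zero
    exact hc.integrable_of_hasCompactSupport hcs
  have hint0 : ∀ j : ℕ, 0 ≤ ∫ v, ‖iteratedFDeriv ℝ j Φ v‖ :=
    fun j => integral_nonneg (fun v => norm_nonneg _)
  set Sn : ℝ := ∑ j ∈ Finset.range (n+1), ∫ v, ‖iteratedFDeriv ℝ j Φ v‖ with hSdef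
  have hS0 : 0 ≤ Sn := Finset.sum_nonneg (fun j _ => hint0 j)
  -- the Japanese bracket integrand
  have hrpow : ∀ w : EuclideanSpace ℝ (Fin d), (1 + ‖w‖) ^ (-(n:ℝ))
      = ((1 + ‖w‖) ^ n)⁻¹ := by
    intro w
    rw [Real.rpow_neg (by positivity), Real.rpow_natCast]
  have hId : Integrable (fun w : EuclideanSpace ℝ (Fin d) => (1 + ‖w‖) ^ (-(n:ℝ))) := by
    apply integrable_one_add_norm
    rw [finrank_euclideanSpace_fin]
    exact_mod_cast hdn
  have hId0 : 0 ≤ ∫ w : EuclideanSpace ℝ (Fin d), (1 + ‖w‖) ^ (-(n:ℝ)) :=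
    integral_nonneg (fun w => Real.rpow_nonneg (by positivity) _)
  -- pointwise bounds
  have hb0 : ∀ w, ‖𝓕 Φ w‖ ≤ Sn := by
    intro w
    calc ‖𝓕 Φ w‖ ≤ ∫ v, ‖Φ v‖ :=
          VectorFourier.norm_fourierIntegral_le_integral_norm _ _ _ _ _
      _ = ∫ v, ‖iteratedFDeriv ℝ 0 Φ v‖ := by
          congr 1
          funext v
          rw [norm_iteratedFDeriv_zero]
      _ ≤ Sn := by
          apply Finset.single_le_sum (f := fun j => ∫ v, ‖iteratedFDeriv ℝ j Φ v‖)
            (fun j _ => hint0 j)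
          exact Finset.mem_range.mpr (Nat.succ_pos n)
  have hbn : ∀ w : EuclideanSpace ℝ (Fin d), ‖w‖ ^ n * ‖𝓕 Φ w‖ ≤ 2 ^ n * Sn := by
    intro w
    have h'f : ∀ (k m : ℕ), k ≤ (0:ℕ∞) → m ≤ (n:ℕ∞) →
        Integrable (fun v : EuclideanSpace ℝ (Fin d) => ‖v‖^k * ‖iteratedFDeriv ℝ m Φ v‖) := by
      intro k m hk hm
      have hk0 : k = 0 := by
        have h0 : (k:ℕ∞) = 0 := le_antisymm hk zero_le
        exact_mod_cast h0
      subst hk0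
      simpa using hint m (by exact_mod_cast hm)
    have key := Real.pow_mul_norm_iteratedFDeriv_fourier_le (K := 0) (N := n)
      hΦ h'f (le_refl _) (le_refl _) w (k := 0) (n := n)
    have h2 : (∑ p ∈ Finset.range (0 + 1) ×ˢ Finset.range (n + 1),
        ∫ v : EuclideanSpace ℝ (Fin d), ‖v‖ ^ p.1 * ‖iteratedFDeriv ℝ p.2 Φ v‖) = Sn := by
      rw [Finset.sum_product, Finset.sum_range_one, hSdef]
      apply Finset.sum_congr rfl
      intro j _
      congr 1
      funext v
      rw [pow_zero, one_mul]
    rw [h2] at key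
    norm_num at key
    exact key
  -- combined pointwise bound
  have hpt : ∀ w : EuclideanSpace ℝ (Fin d),
      ‖𝓕 Φ w‖ ≤ ((1 + 2^n) * 2^n * Sn) * (1 + ‖w‖) ^ (-(n:ℝ)) := by
    intro w
    have hw0 : (0:ℝ) ≤ ‖w‖ := norm_nonneg w
    have h1 : (0:ℝ) < (1 + ‖w‖) ^ n := by positivity
    have hkey : (1 + ‖w‖) ^ n * ‖𝓕 Φ w‖ ≤ 2^n * ((1 + 2^n) * Sn) := by
      have hpow : (1 + ‖w‖) ^ n ≤ 2^n * (1 + ‖w‖^n) := by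
        have hxn : (0:ℝ) ≤ ‖w‖^n := pow_nonneg hw0 n
        have h2n : (0:ℝ) < 2^n := by positivity
        rcases le_total ‖w‖ 1 with hw | hw
        · have ha : (1 + ‖w‖) ^ n ≤ 2 ^ n := pow_le_pow_left₀ (by positivity) (by linarith) n
          nlinarith
        · have ha : (1 + ‖w‖) ^ n ≤ (2 * ‖w‖) ^ n := pow_le_pow_left₀ (by positivity) (by linarith) n
          have hb : ((2:ℝ) * ‖w‖)^n = 2^n * ‖w‖^n := mul_pow 2 ‖w‖ n
          nlinarith
      calc (1 + ‖w‖) ^ n * ‖𝓕 Φ w‖ ≤ (2^n * (1 + ‖w‖^n)) * ‖𝓕 Φ w‖ := by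
            apply mul_le_mul_of_nonneg_right hpow (norm_nonneg _)
        _ = 2^n * (‖𝓕 Φ w‖ + ‖w‖^n * ‖𝓕 Φ w‖) := by ring
        _ ≤ 2^n * (Sn + 2^n * Sn) := by
            apply mul_le_mul_of_nonneg_left _ (by positivity)
            exact add_le_add (hb0 w) (hbn w)
        _ = 2^n * ((1 + 2^n) * Sn) := by ring
    rw [hrpow w, ← div_eq_mul_inv, le_div_iff₀ h1]
    calc ‖𝓕 Φ w‖ * (1 + ‖w‖) ^ n = (1 + ‖w‖) ^ n * ‖𝓕 Φ w‖ := mul_comm _ _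
      _ ≤ 2^n * ((1 + 2^n) * Sn) := hkey
      _ = (1 + 2^n) * 2^n * Sn := by ring
  -- integrate
  calc ∫ w : EuclideanSpace ℝ (Fin d), ‖𝓕 Φ w‖
      ≤ ∫ w : EuclideanSpace ℝ (Fin d), ((1 + 2^n) * 2^n * Sn) * (1 + ‖w‖) ^ (-(n:ℝ)) := by
        apply integral_mono_of_nonneg
        · exact ae_of_all _ (fun w => norm_nonneg _)
        · exact hId.const_mul _
        · exact ae_of_all _ hpt
    _ = ((1 + 2^n) * 2^n * Sn) * ∫ w : EuclideanSpace ℝ (Fin d), (1 + ‖w‖) ^ (-(n:ℝ)) := by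
        rw [integral_const_mul]
    _ = ((1 + 2^n) * 2^n * ∫ w : EuclideanSpace ℝ (Fin d), (1 + ‖w‖) ^ (-(n:ℝ))) * Sn := by
        ring

/-- Corollary 3, item 2 of the paper: for an insulator, i.e. when
`|E(p)| ≥ E₀ > 0` on the support of `h`, the decay constant
`α_{C^{(h)}} = ∫_{−β}^{β} ∫_{ℝ^d} |C^{(h)}(τ,x)| dx dτ` is bounded by
`K·E₀^{−(d+1)}` with `K` independent of `β`. -/
theorem stmt17 {d : ℕ}
    (χ : EuclideanSpace ℝ (Fin d) → ℝ) (hχs : ContDiff ℝ (⊤ : ℕ∞) χ)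
    (hχc : HasCompactSupport χ) (hχ0 : ∀ p, 0 ≤ χ p)
    (a : ℝ) (ha : 0 < a)
    (E : EuclideanSpace ℝ (Fin d) → ℝ) (hE : ContDiff ℝ (d + 2) E)
    (h : EuclideanSpace ℝ (Fin d) → ℝ) (hh : ContDiff ℝ (⊤ : ℕ∞) h)
    (hhc : HasCompactSupport h) (hh0 : ∀ p, 0 ≤ h p)
    (E₀ : ℝ) (hE₀ : 0 < E₀) (hins : ∀ p, h p ≠ 0 → E₀ ≤ |E p|) :
    ∃ K > 0, ∀ β : ℝ, 0 < β →
      (∫ τ in Set.Ioc (-β) β, ∫ x : EuclideanSpace ℝ (Fin d),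
          ‖fermiCovDiff β χ a E h τ x‖) ≤
        K * E₀ ^ (-(d + 1 : ℤ)) := by
  classical
  obtain ⟨A, hA, hAb⟩ := fermiC_deriv_bound (d+1) hE₀
  -- the compactly supported weight ψ
  have hsmul : ContDiff ℝ (⊤ : ℕ∞) (fun p : EuclideanSpace ℝ (Fin d) => a • p) :=
    contDiff_id.const_smul a
  set ψ : EuclideanSpace ℝ (Fin d) → ℝ := fun p => h p * χ (a • p) with hψdef
  have hψs : ContDiff ℝ (⊤ : ℕ∞) ψ := hh.mul (hχs.comp hsmul)
  have hψc : HasCompactSupport ψ := hhc.mul_right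
  set S : Set (EuclideanSpace ℝ (Fin d)) := tsupport ψ with hSdef
  have hScomp : IsCompact S := hψc
  have hSmeas : MeasurableSet S := (isClosed_tsupport ψ).measurableSet
  have hES : ∀ p ∈ S, E₀ ≤ |E p| := by
    intro p hp
    have hsub : S ⊆ tsupport h := closure_mono (Function.support_mul_subset_left _ _)
    have hclosed : IsClosed {q : EuclideanSpace ℝ (Fin d) | E₀ ≤ |E q|} :=
      isClosed_le continuous_const hE.continuous.abs
    have hsupp : Function.support h ⊆ {q : EuclideanSpace ℝ (Fin d) | E₀ ≤ |E q|} :=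
      fun q hq => hins q hq
    exact closure_minimal hsupp hclosed (hsub hp)
  -- uniform bound on the derivatives of ψ
  have hMψex : ∃ Mψ : ℝ, 0 ≤ Mψ ∧ ∀ i, i ≤ d+1 → ∀ p, ‖iteratedFDeriv ℝ i ψ p‖ ≤ Mψ := by
    have hex : ∀ i : ℕ, ∃ C : ℝ, 0 ≤ C ∧ ∀ p, ‖iteratedFDeriv ℝ i ψ p‖ ≤ C := by
      intro i
      obtain ⟨C, hC⟩ := hScomp.exists_bound_of_continuousOn
        ((hψs.continuous_iteratedFDeriv (by exact_mod_cast le_top)).continuousOn)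
      refine ⟨max C 0, le_max_right _ _, fun p => ?_⟩
      rcases em (p ∈ S) with hp | hp
      · exact le_trans (hC p hp) (le_max_left _ _)
      · have : iteratedFDeriv ℝ i ψ p = 0 := by
          apply image_eq_zero_of_notMem_tsupport
          exact fun hcon => hp (tsupport_iteratedFDeriv_subset i hcon)
        rw [this, norm_zero]
        exact le_max_right _ _
    choose C hC0 hC using hex
    refine ⟨∑ i ∈ Finset.range (d+2), C i,
      Finset.sum_nonneg (fun i _ => hC0 i), fun i hi p => ?_⟩
    exact le_trans (hC i p) (Finset.single_le_sum (fun j _ => hC0 j)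
      (Finset.mem_range.mpr (by omega)))
  obtain ⟨Mψ, hMψ0, hMψb⟩ := hMψex
  -- uniform bound on the derivatives of E on S
  have hDex : ∃ D : ℝ, 1 ≤ D ∧ ∀ i, 1 ≤ i → i ≤ d+1 → ∀ p ∈ S, ‖iteratedFDeriv ℝ i E p‖ ≤ D ^ i := by
    have hex : ∀ i : ℕ, i ≤ d+1 → ∃ C : ℝ, 0 ≤ C ∧ ∀ p ∈ S, ‖iteratedFDeriv ℝ i E p‖ ≤ C := by
      intro i hi
      obtain ⟨C, hC⟩ := hScomp.exists_bound_of_continuousOn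
        ((hE.continuous_iteratedFDeriv (by exact_mod_cast (by omega : i ≤ d+2))).continuousOn)
      exact ⟨max C 0, le_max_right _ _, fun p hp => le_trans (hC p hp) (le_max_left _ _)⟩
    choose! C hC0 hC using hex
    refine ⟨1 + ∑ i ∈ Finset.range (d+2), max (C i) 0, by
      have hnn : (0:ℝ) ≤ ∑ i ∈ Finset.range (d+2), max (C i) 0 :=
        Finset.sum_nonneg (fun j _ => le_max_right _ _)
      linarith, fun i h1 hi p hp => ?_⟩
    have hD1 : (1:ℝ) ≤ 1 + ∑ i ∈ Finset.range (d+2), max (C i) 0 := by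
      have : (0:ℝ) ≤ ∑ i ∈ Finset.range (d+2), max (C i) 0 :=
        Finset.sum_nonneg (fun j _ => le_max_right _ _)
      linarith
    have hCD : C i ≤ 1 + ∑ i ∈ Finset.range (d+2), max (C i) 0 := by
      have h1' : C i ≤ max (C i) 0 := le_max_left _ _
      have h2' : max (C i) 0 ≤ ∑ i ∈ Finset.range (d+2), max (C i) 0 :=
        Finset.single_le_sum (f := fun j => max (C j) 0) (fun j _ => le_max_right _ _)
          (Finset.mem_range.mpr (by omega))
      linarith
    calc ‖iteratedFDeriv ℝ i E p‖ ≤ C i := hC i hi p hp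
      _ ≤ 1 + ∑ i ∈ Finset.range (d+2), max (C i) 0 := hCD
      _ ≤ (1 + ∑ i ∈ Finset.range (d+2), max (C i) 0) ^ i :=
          le_self_pow₀ hD1 (by omega)
  obtain ⟨D, hD1, hDb⟩ := hDex
  have hD0 : (0:ℝ) ≤ D := by linarith
  -- the remaining constants
  set Id : ℝ := ∫ w : EuclideanSpace ℝ (Fin d), (1 + ‖w‖) ^ (-((d+1:ℕ):ℝ)) with hIddef
  have hId0 : 0 ≤ Id :=
    integral_nonneg (fun w => Real.rpow_nonneg (by positivity) _)
  set cV : ℝ :=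
    |(((-(2*Real.pi)⁻¹ : ℝ)) ^ (Module.finrank ℝ (EuclideanSpace ℝ (Fin d))))⁻¹| with hcVdef
  have hcV0 : 0 ≤ cV := abs_nonneg _
  set CP : ℝ := 2^(d+1) * Mψ * (((d+1).factorial : ℝ) * A * D^(d+1)) with hCPdef
  have hCP0 : 0 ≤ CP := by
    apply mul_nonneg (mul_nonneg (by positivity) hMψ0)
    apply mul_nonneg (mul_nonneg (by positivity) hA.le) (by positivity)
  set volS : ℝ := (volume S).toReal with hvolSdef
  have hvolS0 : 0 ≤ volS := ENNReal.toReal_nonneg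
  set CT : ℝ := cV * ((1 + 2^(d+1)) * 2^(d+1) * Id) * ((d+1+1 : ℝ) * (CP * volS)) with hCTdef
  have hCT0 : 0 ≤ CT := by
    apply mul_nonneg (mul_nonneg hcV0 (by positivity))
    apply mul_nonneg (by positivity) (mul_nonneg hCP0 hvolS0)
  -- the final constant
  refine ⟨(CT * (6 / (E₀/2)) + 1) * E₀ ^ (d+1), by positivity, fun β hβ => ?_⟩
  have hKeq : ((CT * (6 / (E₀/2)) + 1) * E₀ ^ (d+1)) * E₀ ^ (-(d + 1 : ℤ))
      = CT * (6 / (E₀/2)) + 1 := by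
    have hz : E₀ ^ (-(d + 1 : ℤ)) = (E₀ ^ (d+1 : ℕ))⁻¹ := by
      rw [zpow_neg]
      norm_cast
    rw [hz, mul_assoc, mul_inv_cancel₀ (pow_ne_zero _ hE₀.ne'), mul_one]
  rw [hKeq]
  -- the weight function of τ
  set W : ℝ → ℝ := fun τ => Real.exp (-(E₀/2) * |τ|) + Real.exp (-(E₀/2) * (β - |τ|))
      + Real.exp (-(E₀/2) * β) with hWdef
  have hW0 : ∀ τ, 0 ≤ W τ := fun τ => by positivity
  have hWc : Continuous W := by
    apply Continuous.add
    apply Continuous.add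
    · exact Real.continuous_exp.comp (continuous_const.mul continuous_abs)
    · exact Real.continuous_exp.comp (continuous_const.mul (continuous_const.sub continuous_abs))
    · exact continuous_const
  -- the key pointwise-in-τ estimate
  have key : ∀ τ ∈ Set.Ioc (-β) β,
      (∫ x : EuclideanSpace ℝ (Fin d), ‖fermiCovDiff β χ a E h τ x‖) ≤ CT * W τ := by
    intro τ hτ
    set F : ℝ → ℝ := fermiC β τ with hFdef
    have hFs : ContDiff ℝ (⊤ : ℕ∞) F := contDiff_fermiC β τ hβ hτ
    set G : EuclideanSpace ℝ (Fin d) → ℝ := F ∘ E with hGdef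
    have hGs : ContDiff ℝ (d+1) G :=
      (hFs.of_le (by exact_mod_cast le_top)).comp (hE.of_le (by exact_mod_cast (by omega : d+1 ≤ d+2)))
    set Φr : EuclideanSpace ℝ (Fin d) → ℝ := fun p => ψ p * G p with hΦrdef
    have hΦrs : ContDiff ℝ (d+1) Φr := (hψs.of_le (by exact_mod_cast le_top)).mul hGs
    set Φ : EuclideanSpace ℝ (Fin d) → ℂ := fun p => ((Φr p : ℝ) : ℂ) with hΦdef
    have hΦs : ContDiff ℝ (d+1) Φ := Complex.ofRealCLM.contDiff.comp hΦrs
    have hΦrc : HasCompactSupport Φr := hψc.mul_right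
    have hΦc : HasCompactSupport Φ := hΦrc.comp_left (g := Complex.ofReal) Complex.ofReal_zero
    -- scalar derivative bound at points of S
    have hC : ∀ p ∈ S, ∀ i, i ≤ d+1 → ‖iteratedFDeriv ℝ i F (E p)‖ ≤ A * W τ := by
      intro p hp i hi
      rw [norm_iteratedFDeriv_eq_norm_iteratedDeriv, Real.norm_eq_abs]
      exact hAb β τ hβ hτ i hi (E p) (hES p hp)
    -- composition bound
    have hGb : ∀ p ∈ S, ∀ l, l ≤ d+1 →
        ‖iteratedFDeriv ℝ l G p‖ ≤ ((d+1).factorial : ℝ) * (A * W τ) * D^(d+1) := by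
      intro p hp l hl
      have hcomp := norm_iteratedFDeriv_comp_le (g := F) (f := E) (n := l)
        (N := ((d+1:ℕ) : WithTop ℕ∞)) (hFs.of_le (by exact_mod_cast le_top))
        (hE.of_le (by exact_mod_cast (by omega : d+1 ≤ d+2)))
        (by exact_mod_cast hl) p
        (C := A * W τ) (D := D)
        (fun i hi => hC p hp i (le_trans hi hl))
        (fun i h1 hi => hDb i h1 (le_trans hi hl) p hp)
      refine le_trans hcomp ?_
      have hAW : 0 ≤ A * W τ := mul_nonneg hA.le (hW0 τ)
      have hf1 : (l.factorial : ℝ) ≤ ((d+1).factorial : ℝ) := by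
        exact_mod_cast Nat.factorial_le hl
      have hf2 : D ^ l ≤ D ^ (d+1) := pow_le_pow_right₀ hD1 hl
      apply mul_le_mul
      · exact mul_le_mul_of_nonneg_right hf1 hAW
      · exact hf2
      · positivity
      · exact mul_nonneg (by positivity) hAW
    -- pointwise derivative bound for Φ
    have hΦbound : ∀ j, j ≤ d+1 → ∀ p,
        ‖iteratedFDeriv ℝ j Φ p‖ ≤ S.indicator (fun _ => CP * W τ) p := by
      intro j hj p
      rcases em (p ∈ S) with hp | hp
      · rw [Set.indicator_of_mem hp]
        have hnorm : ‖iteratedFDeriv ℝ j Φ p‖ = ‖iteratedFDeriv ℝ j Φr p‖ := by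
          have heq : Φ = (Complex.ofRealLI ∘ Φr) := rfl
          rw [heq]
          exact Complex.ofRealLI.norm_iteratedFDeriv_comp_left hΦrs.contDiffAt
            (by exact_mod_cast hj)
        rw [hnorm]
        have hmul := norm_iteratedFDeriv_mul_le (𝕜 := ℝ) (A := ℝ)
          (N := ((d+1:ℕ) : WithTop ℕ∞)) (hψs.of_le (by exact_mod_cast le_top)) hGs p (by exact_mod_cast hj)
        refine le_trans hmul ?_
        have hterm : ∀ i ∈ Finset.range (j+1),
            (j.choose i : ℝ) * ‖iteratedFDeriv ℝ i ψ p‖ * ‖iteratedFDeriv ℝ (j-i) G p‖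
              ≤ (j.choose i : ℝ) * (Mψ * (((d+1).factorial : ℝ) * (A * W τ) * D^(d+1))) := by
          intro i hi
          have hi' : i ≤ j := Nat.lt_succ_iff.mp (Finset.mem_range.mp hi)
          have hx := mul_le_mul (hMψb i (by omega) p) (hGb p hp (j-i) (by omega))
            (norm_nonneg _) hMψ0
          calc (j.choose i : ℝ) * ‖iteratedFDeriv ℝ i ψ p‖ * ‖iteratedFDeriv ℝ (j-i) G p‖
              = (j.choose i : ℝ) * (‖iteratedFDeriv ℝ i ψ p‖ * ‖iteratedFDeriv ℝ (j-i) G p‖) := by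
                ring
            _ ≤ (j.choose i : ℝ) * (Mψ * (((d+1).factorial : ℝ) * (A * W τ) * D^(d+1))) := by
                apply mul_le_mul_of_nonneg_left hx (by positivity)
        refine le_trans (Finset.sum_le_sum hterm) ?_
        rw [← Finset.sum_mul]
        have hbin : (∑ i ∈ Finset.range (j+1), (j.choose i : ℝ)) = 2^j := by
          rw [← Nat.cast_sum, Nat.sum_range_choose]
          push_cast
          ring
        rw [hbin]
        have h2j : (2:ℝ)^j ≤ 2^(d+1) := pow_le_pow_right₀ one_le_two hj
        calc (2:ℝ)^j * (Mψ * (((d+1).factorial : ℝ) * (A * W τ) * D^(d+1)))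
            ≤ 2^(d+1) * (Mψ * (((d+1).factorial : ℝ) * (A * W τ) * D^(d+1))) := by
              apply mul_le_mul_of_nonneg_right h2j
              apply mul_nonneg hMψ0
              apply mul_nonneg (mul_nonneg (by positivity) (mul_nonneg hA.le (hW0 τ))) (by positivity)
          _ = CP * W τ := by rw [hCPdef]; ring
      · rw [Set.indicator_of_notMem hp]
        have hsub2 : tsupport Φ ⊆ S := by
          apply closure_minimal _ (isClosed_tsupport ψ)
          intro q hq
          have hΦq : Φr q ≠ 0 := by
            intro hcon
            apply hq
            rw [hΦdef]
            simp only [hcon, Complex.ofReal_zero]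
          have hψq : ψ q ≠ 0 := by
            intro hcon
            apply hΦq
            rw [hΦrdef]
            simp only [hcon, zero_mul]
          exact subset_closure hψq
        have : iteratedFDeriv ℝ j Φ p = 0 := by
          apply image_eq_zero_of_notMem_tsupport
          exact fun hcon => hp (hsub2 (tsupport_iteratedFDeriv_subset j hcon))
        rw [this, norm_zero]
    -- integral bounds for the derivatives of Φ
    have hjint : ∀ j ∈ Finset.range (d+1+1),
        (∫ v, ‖iteratedFDeriv ℝ j Φ v‖) ≤ CP * W τ * volS := by
      intro j hj
      have hj' : j ≤ d+1 := Nat.lt_succ_iff.mp (Finset.mem_range.mp hj)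
      have hind : Integrable (S.indicator (fun _ => CP * W τ)) :=
        (integrableOn_const hScomp.measure_lt_top.ne).integrable_indicator hSmeas
      calc ∫ v, ‖iteratedFDeriv ℝ j Φ v‖
          ≤ ∫ v, S.indicator (fun _ => CP * W τ) v :=
            integral_mono_of_nonneg (ae_of_all _ (fun v => norm_nonneg _)) hind
              (ae_of_all _ (hΦbound j hj'))
        _ = (volume S).toReal • (CP * W τ) := integral_indicator_const _ hSmeas
        _ = CP * W τ * volS := by rw [smul_eq_mul, hvolSdef]; ring
    -- identification with the Fourier transform
    have hπ : (2*Real.pi) ≠ 0 := by positivity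
    have hcov : ∀ x, fermiCovDiff β χ a E h τ x
        = FourierTransform.fourier Φ ((-(2*Real.pi)⁻¹ : ℝ) • x) := by
      intro x
      rw [Real.fourier_eq', fermiCovDiff]
      congr 1
      funext p
      have hip : (inner ℝ p ((-(2*Real.pi)⁻¹ : ℝ) • x) : ℝ)
          = (-(2*Real.pi)⁻¹) * (inner ℝ p x : ℝ) := real_inner_smul_right _ _ _
      rw [hip]
      have harg : -2 * Real.pi * (-(2*Real.pi)⁻¹ * (inner ℝ p x : ℝ)) = (inner ℝ p x : ℝ) := by
        field_simp
      rw [harg, smul_eq_mul]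
      rw [hΦdef, hΦrdef, hψdef, hGdef, hFdef]
      simp only [Function.comp_apply]
      push_cast
      rw [mul_comm Complex.I]
      ring
    -- the x-integral
    calc (∫ x : EuclideanSpace ℝ (Fin d), ‖fermiCovDiff β χ a E h τ x‖)
        = ∫ x : EuclideanSpace ℝ (Fin d),
            ‖FourierTransform.fourier Φ ((-(2*Real.pi)⁻¹ : ℝ) • x)‖ := by
          congr 1
          funext x
          rw [hcov x]
      _ = cV * ∫ w, ‖FourierTransform.fourier Φ w‖ := by
          rw [MeasureTheory.Measure.integral_comp_smul volume
            (fun y => ‖FourierTransform.fourier Φ y‖) (-(2*Real.pi)⁻¹), smul_eq_mul, hcVdef]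
      _ ≤ cV * (((1 + 2^(d+1)) * 2^(d+1) * Id) *
            ∑ j ∈ Finset.range (d+1+1), ∫ v, ‖iteratedFDeriv ℝ j Φ v‖) := by
          apply mul_le_mul_of_nonneg_left _ hcV0
          exact l1_fourier_bound (by omega) Φ hΦs hΦc
      _ ≤ cV * (((1 + 2^(d+1)) * 2^(d+1) * Id) * ((d+1+1 : ℝ) * (CP * W τ * volS))) := by
          apply mul_le_mul_of_nonneg_left _ hcV0
          apply mul_le_mul_of_nonneg_left _ (by positivity)
          have hsum := Finset.sum_le_card_nsmul (Finset.range (d+1+1))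
            (fun j => ∫ v, ‖iteratedFDeriv ℝ j Φ v‖) (CP * W τ * volS) hjint
          rw [Finset.card_range] at hsum
          calc (∑ j ∈ Finset.range (d+1+1), ∫ v, ‖iteratedFDeriv ℝ j Φ v‖)
              ≤ (d+1+1) • (CP * W τ * volS) := hsum
            _ = (d+1+1 : ℝ) * (CP * W τ * volS) := by
                rw [nsmul_eq_mul]
                push_cast
                ring
      _ = CT * W τ := by rw [hCTdef]; ring
  -- assemble the τ-integral
  have hair : ∀ᵐ τ ∂(volume.restrict (Set.Ioc (-β) β)),
      (∫ x : EuclideanSpace ℝ (Fin d), ‖fermiCovDiff β χ a E h τ x‖) ≤ CT * W τ := by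
    rw [MeasureTheory.ae_restrict_iff' measurableSet_Ioc]
    exact ae_of_all _ key
  calc (∫ τ in Set.Ioc (-β) β, ∫ x : EuclideanSpace ℝ (Fin d),
          ‖fermiCovDiff β χ a E h τ x‖)
      ≤ ∫ τ in Set.Ioc (-β) β, CT * W τ := by
        apply integral_mono_of_nonneg
        · exact ae_of_all _ (fun τ => integral_nonneg (fun x => norm_nonneg _))
        · exact ((continuous_const.mul hWc).integrableOn_Ioc)
        · exact hair
    _ = CT * ∫ τ in Set.Ioc (-β) β, W τ := integral_const_mul _ _
    _ ≤ CT * (6 / (E₀/2)) := by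
        apply mul_le_mul_of_nonneg_left _ hCT0
        exact W_integral_bound (by positivity) hβ
    _ ≤ CT * (6 / (E₀/2)) + 1 := by linarith
end
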